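/- arXiv:2603.12490 — 7 statements merged into one kernel-verified Lean document; each statement's English description precedes it below -/
import Mathlib

section
/- For a finite group G, a prime p, and an integer h ≥ 1, the rational number |Hom(ℤ_p^h, G)| / |G| is a p-local integer (i.e., its denominator is coprime to p). Here Hom(ℤ_p^h, G) denotes continuous homomorphisms, equivalently h-tuples of pairwise commuting elements of G each of p-power order. -/
/-!
We show that the `p`-part `|G|_p` of `|G|` divides the number of commuting `h`-tuples of
`p`-elements, by induction on `h`. Fixing the first entry `x` leaves a commuting `(h-1)`-tuple in
the centralizer `C(x)`; grouping the `x` into conjugacy classes writes the count as a sum of terms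
`[G : C(x)] * #Hom(ℤ_p^(h-1), C(x))`, each divisible by `|G|_p` by induction.

The case `h = 1` is Frobenius' theorem for `p`-elements. Every `g` is uniquely a product `u * v` of
commuting elements with `u` a `p`-element and `v` of order prime to `p`, so `|G|` is the sum over
such `v` of the number of `p`-elements of `C(v)`. By induction on `|G|`, the non-central classes
contribute multiples of `|G|_p`; the central `v` contribute `z * #{p-elements of G}`, where `z` is
the order of a subgroup without elements of order `p`, hence prime to `p`.
-/

open Subgroup

theorem MulAction.dvd_sum_of_dvd_index_stabilizer_mul {G α : Type*} [Group G] [MulAction G α]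
    [Fintype α] {s : Finset α} (hs : ∀ (g : G) x, g • x ∈ s ↔ x ∈ s) {f : α → ℕ}
    (hf : ∀ (g : G) x, f (g • x) = f x) {d : ℕ}
    (hd : ∀ x ∈ s, d ∣ (stabilizer G x).index * f x) : d ∣ ∑ x ∈ s, f x := by
  classical
  set F : α → ℕ := fun x => if x ∈ s then f x else 0
  have hF : ∀ (g : G) x, F (g • x) = F x := fun g x => by simp only [F, hs, hf]
  have hsum : ∑ x ∈ s, f x = ∑ ω : orbitRel.Quotient G α, ∑ y : orbit G ω.out, F y := by
    rw [← Fintype.sum_sigma (fun z : Σ ω : orbitRel.Quotient G α, orbit G ω.out => F z.2),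
      ← Fintype.sum_equiv (selfEquivSigmaOrbits G α) F _ (fun _ => rfl), ← Finset.univ_inter s,
      ← Finset.sum_ite_mem]
  rw [hsum]
  refine Finset.dvd_sum fun ω _ => ?_
  have horbit : ∀ y : orbit G ω.out, F y = F ω.out := by
    rintro ⟨_, g, rfl⟩
    exact hF g _
  rw [Finset.sum_congr rfl fun y _ => horbit y, Finset.sum_const, Finset.card_univ, smul_eq_mul,
    ← Nat.card_eq_fintype_card, Nat.card_coe_set_eq, ← index_stabilizer]
  by_cases hω : ω.out ∈ s
  · simpa only [F, hω, if_true] using hd _ hω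
  · simp only [F, hω, if_false, mul_zero, dvd_zero]

section

variable {G H : Type*} [Group G] [Group H] {p : ℕ}

theorem Subgroup.ordProj_card_dvd_index_mul [Finite G] (K : Subgroup G) {N : ℕ}
    (hN : ordProj[p] (Nat.card K) ∣ N) : ordProj[p] (Nat.card G) ∣ K.index * N := by
  rw [← K.index_mul_card, Nat.ordProj_mul p K.index_ne_zero_of_finite Nat.card_pos.ne']
  exact mul_dvd_mul (Nat.ordProj_dvd _ _) hN

theorem orderOf_conj (g x : G) : orderOf (g * x * g⁻¹) = orderOf x :=
  (MulAut.conj g).orderOf_eq x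

theorem Subgroup.conj_mem_center_iff {g x : G} :
    g * x * g⁻¹ ∈ center G ↔ x ∈ center G := by
  refine ⟨fun h => ?_, fun h => instNormalCenter.conj_mem x h g⟩
  simpa [mul_assoc] using instNormalCenter.conj_mem _ h g⁻¹

theorem Subgroup.centralizer_conj (g x : G) :
    centralizer {g * x * g⁻¹} = (centralizer {x}).map (MulAut.conj g).toMonoidHom := by
  ext y
  rw [mem_map_equiv, MulAut.conj_symm_apply, mem_centralizer_singleton_iff,
    mem_centralizer_singleton_iff]
  constructor <;> intro h
  · calc g⁻¹ * y * g * x = g⁻¹ * (y * (g * x * g⁻¹)) * g := by group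
      _ = x * (g⁻¹ * y * g) := by rw [h]; group
  · calc y * (g * x * g⁻¹) = g * (g⁻¹ * y * g * x) * g⁻¹ := by group
      _ = g * x * g⁻¹ * y := by rw [h]; group

theorem Subgroup.index_stabilizer_conjAct (x : G) :
    (MulAction.stabilizer (ConjAct G) x).index = (centralizer {x}).index := by
  rw [centralizer_eq_comap_stabilizer]
  exact (index_comap_of_surjective _ ConjAct.toConjAct.surjective).symm

noncomputable def centralizerConjEquiv (g x : G) :
    centralizer {x} ≃* centralizer {g * x * g⁻¹} :=
  ((MulAut.conj g).subgroupMap _).trans (MulEquiv.subgroupCongr (centralizer_conj g x).symm)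

theorem dvd_sum_of_dvd_index_centralizer_mul [Fintype G] {s : Finset G}
    (hs : ∀ g x, g * x * g⁻¹ ∈ s ↔ x ∈ s) {f : G → ℕ} (hf : ∀ g x, f (g * x * g⁻¹) = f x)
    {d : ℕ} (hd : ∀ x ∈ s, d ∣ (centralizer {x}).index * f x) : d ∣ ∑ x ∈ s, f x :=
  MulAction.dvd_sum_of_dvd_index_stabilizer_mul (G := ConjAct G)
    (fun g x => by rw [ConjAct.smul_def]; exact hs _ x)
    (fun g x => by rw [ConjAct.smul_def]; exact hf _ x)
    (fun x hx => by rw [index_stabilizer_conjAct]; exact hd x hx)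

def IsPElement (p : ℕ) (g : G) : Prop := ∃ k : ℕ, orderOf g = p ^ k

theorem isPElement_of_orderOf_dvd (hp : p.Prime) {g : G} {k : ℕ} (h : orderOf g ∣ p ^ k) :
    IsPElement p g := by
  obtain ⟨j, -, hj⟩ := (Nat.dvd_prime_pow hp).mp h
  exact ⟨j, hj⟩

theorem Commute.isPElement_mul (hp : p.Prime) {x y : G} (hxy : Commute x y)
    (hx : IsPElement p x) (hy : IsPElement p y) : IsPElement p (x * y) := by
  obtain ⟨i, hi⟩ := hx
  obtain ⟨j, hj⟩ := hy
  exact isPElement_of_orderOf_dvd hp (k := i + j) <| by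
    simpa [hi, hj, pow_add] using hxy.orderOf_mul_dvd_mul_orderOf

theorem Commute.not_dvd_orderOf_mul (hp : p.Prime) {x y : G} (hxy : Commute x y)
    (hx : ¬ p ∣ orderOf x) (hy : ¬ p ∣ orderOf y) : ¬ p ∣ orderOf (x * y) := fun hdvd =>
  (hp.dvd_mul.mp (hdvd.trans hxy.orderOf_mul_dvd_mul_orderOf)).elim hx hy

theorem IsPElement.inv {g : G} (hg : IsPElement p g) : IsPElement p g⁻¹ := by
  simpa only [IsPElement, orderOf_inv] using hg

theorem IsPElement.eq_one_of_not_dvd_orderOf {g : G} (hg : IsPElement p g)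
    (hdvd : ¬ p ∣ orderOf g) : g = 1 := by
  obtain ⟨k, hk⟩ := hg
  rcases k with _ | k
  · rwa [pow_zero, orderOf_eq_one_iff] at hk
  · exact absurd (hk ▸ dvd_pow_self p k.succ_ne_zero) hdvd

theorem isPElement_map_iff {f : G →* H} (hf : Function.Injective f) {g : G} :
    IsPElement p (f g) ↔ IsPElement p g := by
  simp only [IsPElement, orderOf_injective f hf]

theorem isPElement_conj_iff {g x : G} : IsPElement p (g * x * g⁻¹) ↔ IsPElement p x := by
  simp only [IsPElement, orderOf_conj]

theorem exists_isPElement_mul_eq [Finite G] (hp : p.Prime) (g : G) :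
    ∃ u ∈ zpowers g, ∃ v ∈ zpowers g, IsPElement p u ∧ ¬ p ∣ orderOf v ∧ u * v = g := by
  have hn : orderOf g ≠ 0 := (orderOf_pos g).ne'
  set q := ordProj[p] (orderOf g)
  set m := ordCompl[p] (orderOf g)
  obtain ⟨a, b, hab⟩ : IsCoprime (q : ℤ) (m : ℤ) :=
    Nat.isCoprime_iff_coprime.mpr ((Nat.coprime_ordCompl hp hn).pow_left _)
  have hpow : ∀ c : ℤ, (g ^ c) ^ (q * m) = 1 := fun c => by
    rw [Nat.ordProj_mul_ordCompl_eq_self, ← zpow_natCast, ← zpow_mul, mul_comm, zpow_mul,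
      zpow_natCast, pow_orderOf_eq_one, one_zpow]
  refine ⟨g ^ (b * m), zpow_mem_zpowers _ _, g ^ (a * q), zpow_mem_zpowers _ _, ?_, ?_, ?_⟩
  · refine isPElement_of_orderOf_dvd hp (k := (orderOf g).factorization p)
      (orderOf_dvd_of_pow_eq_one ?_)
    rw [zpow_mul, zpow_natCast, ← pow_mul, mul_comm, hpow]
  · refine fun hdvd => Nat.not_dvd_ordCompl hp hn (hdvd.trans (orderOf_dvd_of_pow_eq_one ?_))
    rw [zpow_mul, zpow_natCast, ← pow_mul, hpow]
  · rw [← zpow_add, add_comm, hab, zpow_one]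

theorem eq_of_mul_eq_mul_of_isPElement (hp : p.Prime) {u v u' v' : G} (hu : Commute u u')
    (hv : Commute v v') (hpu : IsPElement p u) (hpu' : IsPElement p u')
    (hqv : ¬ p ∣ orderOf v) (hqv' : ¬ p ∣ orderOf v') (h : u * v = u' * v') :
    u = u' ∧ v = v' := by
  have heq : u'⁻¹ * u = v' * v⁻¹ := by
    rw [inv_mul_eq_iff_eq_mul, ← mul_assoc, ← h, mul_inv_cancel_right]
  have hone : u'⁻¹ * u = 1 := by
    refine (hu.symm.inv_left.isPElement_mul hp hpu'.inv hpu).eq_one_of_not_dvd_orderOf ?_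
    rw [heq]
    exact hv.symm.inv_right.not_dvd_orderOf_mul hp hqv' (by rwa [orderOf_inv])
  refine ⟨(inv_mul_eq_one.mp hone).symm, (mul_inv_eq_one.mp (heq ▸ hone)).symm⟩

theorem Commute.eq_of_mul_eq_of_isPElement [Finite G] (hp : p.Prime) {u v u' v' : G}
    (huv : Commute u v) (hu'v' : Commute u' v') (hpu : IsPElement p u) (hpu' : IsPElement p u')
    (hqv : ¬ p ∣ orderOf v) (hqv' : ¬ p ∣ orderOf v') (h : u * v = u' * v') :
    u = u' ∧ v = v' := by
  obtain ⟨w, ⟨k, hk⟩, w', ⟨k', hk'⟩, hpw, hqw', hww'⟩ := exists_isPElement_mul_eq hp (u * v)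
  have hcanon : ∀ {a b : G}, Commute a b → IsPElement p a → ¬ p ∣ orderOf b → a * b = u * v →
      a = w ∧ b = w' := by
    intro a b hab hpa hqb he
    refine eq_of_mul_eq_mul_of_isPElement hp ?_ ?_ hpa hpw hqb hqw' (he.trans hww'.symm)
    · rw [← hk, ← he]
      exact ((Commute.refl a).mul_right hab).zpow_right k
    · rw [← hk', ← he]
      exact (hab.symm.mul_right (Commute.refl b)).zpow_right k'
  obtain ⟨rfl, rfl⟩ := hcanon huv hpu hqv rfl
  exact (hcanon hu'v' hpu' hqv' h.symm).imp Eq.symm Eq.symm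

theorem MulEquiv.card_isPElement (e : G ≃* H) :
    Nat.card {g : G // IsPElement p g} = Nat.card {x : H // IsPElement p x} :=
  Nat.card_congr <| e.toEquiv.subtypeEquiv fun _ =>
    (isPElement_map_iff (f := e.toMonoidHom) e.injective).symm

open scoped Classical in
theorem card_eq_sum_card_isPElement_centralizer [Fintype G] (hp : p.Prime) :
    Nat.card G =
      ∑ v : G with ¬ p ∣ orderOf v, Nat.card {u : centralizer {v} // IsPElement p u} := by
  have hval : ∀ {v : G} (u : centralizer {v}), IsPElement p (u : G) ↔ IsPElement p u :=
    fun _ => isPElement_map_iff (subtype_injective _)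
  let e : (Σ v : {v : G // ¬ p ∣ orderOf v}, {u : centralizer {v.1} // IsPElement p u}) ≃ G :=
    Equiv.ofBijective (fun x => x.2.1 * x.1.1) ⟨?_, fun g => ?_⟩
  · rw [← Nat.card_congr e, Nat.card_sigma, Finset.sum_subtype (M := ℕ) {v : G | ¬ p ∣ orderOf v}
      (fun _ => Finset.mem_filter_univ _)]
  · rintro ⟨⟨v, hv⟩, ⟨u, hu⟩⟩ ⟨⟨v', hv'⟩, ⟨u', hu'⟩⟩ he
    obtain ⟨huu', rfl⟩ := Commute.eq_of_mul_eq_of_isPElement hp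
      (mem_centralizer_singleton_iff.mp u.2) (mem_centralizer_singleton_iff.mp u'.2)
      ((hval u).mpr hu) ((hval u').mpr hu') hv hv' he
    obtain rfl := Subtype.ext huu'
    rfl
  · obtain ⟨u, ⟨k, rfl⟩, v, ⟨k', rfl⟩, hpu, hqv, huv⟩ := exists_isPElement_mul_eq hp g
    exact ⟨⟨⟨_, hqv⟩, ⟨⟨_, mem_centralizer_singleton_iff.mpr (Commute.zpow_zpow_self g k k')⟩,
      (hval _).mp hpu⟩⟩, huv⟩

open scoped Classical in
theorem not_dvd_card_filter_center [Fintype G] (hp : p.Prime) :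
    ¬ p ∣ (Finset.univ.filter fun x : G => ¬ p ∣ orderOf x ∧ x ∈ center G).card := by
  let Q : Subgroup G :=
    { carrier := {x | ¬ p ∣ orderOf x ∧ x ∈ center G}
      mul_mem' := fun ⟨hx, hxc⟩ ⟨hy, hyc⟩ =>
        ⟨Commute.not_dvd_orderOf_mul hp (mem_center_iff.mp hyc _) hx hy, mul_mem hxc hyc⟩
      one_mem' := ⟨by simpa using hp.not_dvd_one, one_mem _⟩
      inv_mem' := fun ⟨hx, hxc⟩ => ⟨by rwa [orderOf_inv], inv_mem hxc⟩ }
  have hQ :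
      Nat.card Q = (Finset.univ.filter fun x : G => ¬ p ∣ orderOf x ∧ x ∈ center G).card := by
    change Nat.card {x : G // ¬ p ∣ orderOf x ∧ x ∈ center G} = _
    rw [Nat.card_eq_fintype_card, Fintype.card_subtype]
  intro hdvd
  have := Fact.mk hp
  obtain ⟨x, hx⟩ := exists_prime_orderOf_dvd_card' (G := Q) p (hQ ▸ hdvd)
  exact x.2.1 (by rw [orderOf_coe, hx])

theorem ordProj_card_dvd_card_isPElement (hp : p.Prime) (G : Type*) [Group G] [Finite G] :
    ordProj[p] (Nat.card G) ∣ Nat.card {g : G // IsPElement p g} := by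
  induction hn : Nat.card G using Nat.strong_induction_on generalizing G with | _ n ih =>
  subst hn
  cases nonempty_fintype G
  classical
  have hsplit := card_eq_sum_card_isPElement_centralizer (G := G) hp
  rw [← Finset.sum_filter_add_sum_filter_not _ (· ∈ center G)] at hsplit
  have hcentral :
      ∀ v ∈ (Finset.univ.filter fun v : G => ¬ p ∣ orderOf v).filter (· ∈ center G),
      Nat.card {u : centralizer {v} // IsPElement p u} = Nat.card {g : G // IsPElement p g} := by
    intro v hv
    have htop : centralizer {v} = ⊤ := centralizer_eq_top_iff_subset.mpr
      (Set.singleton_subset_iff.mpr (Finset.mem_filter.mp hv).2)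
    exact ((MulEquiv.subgroupCongr htop).trans topEquiv).card_isPElement
  have hnoncentral : ordProj[p] (Nat.card G) ∣
      ∑ v ∈ (Finset.univ.filter fun v : G => ¬ p ∣ orderOf v).filter (· ∉ center G),
        Nat.card {u : centralizer {v} // IsPElement p u} := by
    refine dvd_sum_of_dvd_index_centralizer_mul (fun g x => ?_) (fun g x => ?_) (fun x hx => ?_)
    · simp only [Finset.mem_filter, Finset.mem_univ, true_and, orderOf_conj,
        conj_mem_center_iff]
    · exact (centralizerConjEquiv g x).card_isPElement.symm
    · have hne : centralizer {x} ≠ ⊤ := fun htop => (Finset.mem_filter.mp hx).2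
        (centralizer_eq_top_iff_subset.mp htop rfl)
      refine (centralizer {x}).ordProj_card_dvd_index_mul (ih _ ?_ _ rfl)
      exact (card_le_card_group _).lt_of_ne fun hcard => hne ((card_eq_iff_eq_top _).mp hcard)
  rw [Finset.sum_const_nat hcentral, Finset.filter_filter] at hsplit
  have hdvd := (Nat.dvd_add_left hnoncentral).mp
    ((congrArg (ordProj[p] (Nat.card G) ∣ ·) hsplit).mp (Nat.ordProj_dvd _ _))
  exact (Nat.Coprime.pow_left _ ((hp.coprime_iff_not_dvd).mpr
    (not_dvd_card_filter_center hp))).dvd_of_dvd_mul_left hdvd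

def commutingPTuples (p : ℕ) (G : Type*) [Group G] (h : ℕ) : Set (Fin h → G) :=
  {v | (∀ i j, Commute (v i) (v j)) ∧ ∀ i, IsPElement p (v i)}

theorem comp_mem_commutingPTuples_iff {f : G →* H} (hf : Function.Injective f) {h : ℕ}
    {v : Fin h → G} : f ∘ v ∈ commutingPTuples p H h ↔ v ∈ commutingPTuples p G h := by
  simp only [commutingPTuples, Set.mem_ofPred_eq, Function.comp_apply,
    commute_map_iff (f := f) hf, isPElement_map_iff hf]

theorem cons_mem_commutingPTuples_iff {h : ℕ} {x : G} {v : Fin h → G} :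
    Fin.cons x v ∈ commutingPTuples p G (h + 1) ↔
      IsPElement p x ∧ (∀ i, Commute x (v i)) ∧ v ∈ commutingPTuples p G h := by
  simp only [commutingPTuples, Set.mem_ofPred_eq, Fin.forall_fin_succ, Fin.cons_zero,
    Fin.cons_succ, Commute.refl, true_and]
  exact ⟨fun ⟨⟨h0, hs⟩, hp0, hps⟩ => ⟨hp0, h0, fun i j => (hs i).2 j, hps⟩,
    fun ⟨hp0, h0, hv, hps⟩ => ⟨⟨h0, fun i => ⟨(h0 i).symm, hv i⟩⟩, hp0, hps⟩⟩

theorem MulEquiv.card_commutingPTuples (e : G ≃* H) (h : ℕ) :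
    Nat.card (commutingPTuples p G h) = Nat.card (commutingPTuples p H h) :=
  Nat.card_congr <| (Equiv.piCongrRight fun _ => e.toEquiv).subtypeEquiv fun _ =>
    (comp_mem_commutingPTuples_iff (f := e.toMonoidHom) e.injective).symm

theorem card_commutingPTuples_one :
    Nat.card (commutingPTuples p G 1) = Nat.card {g : G // IsPElement p g} :=
  Nat.card_congr <| (Equiv.funUnique (Fin 1) G).subtypeEquiv fun v => by
    simp [commutingPTuples, Fin.forall_fin_one]

open scoped Classical in
theorem card_commutingPTuples_succ [Fintype G] (h : ℕ) :
    Nat.card (commutingPTuples p G (h + 1)) =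
      ∑ x : G with IsPElement p x, Nat.card (commutingPTuples p (centralizer {x}) h) := by
  have hval : ∀ {x : G} (w : Fin h → centralizer {x}),
      (↑) ∘ w ∈ commutingPTuples p G h ↔ w ∈ commutingPTuples p (centralizer {x}) h :=
    fun _ => comp_mem_commutingPTuples_iff (subtype_injective _)
  let e : (Σ x : {x : G // IsPElement p x}, commutingPTuples p (centralizer {x.1}) h) ≃
      commutingPTuples p G (h + 1) :=
    { toFun := fun x => ⟨Fin.cons x.1.1 (Subtype.val ∘ x.2.1),
        cons_mem_commutingPTuples_iff.mpr ⟨x.1.2,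
          fun i => (mem_centralizer_singleton_iff.mp (x.2.1 i).2 : Commute _ _).symm,
          (hval _).mpr x.2.2⟩⟩
      invFun := fun v =>
        have hv := cons_mem_commutingPTuples_iff.mp ((Fin.cons_self_tail v.1).symm ▸ v.2)
        ⟨⟨v.1 0, hv.1⟩, ⟨fun i => ⟨v.1 i.succ, mem_centralizer_singleton_iff.mpr (hv.2.1 i).symm⟩,
          (hval _).mp hv.2.2⟩⟩
      left_inv := fun _ => rfl
      right_inv := fun v => Subtype.ext (Fin.cons_self_tail v.1) }
  rw [← Nat.card_congr e, Nat.card_sigma,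
    Finset.sum_subtype (M := ℕ) {x : G | IsPElement p x} (fun _ => Finset.mem_filter_univ _)]

theorem ordProj_card_dvd_card_commutingPTuples (hp : p.Prime) {h : ℕ} (hh : 1 ≤ h) (G : Type*)
    [Group G] [Finite G] : ordProj[p] (Nat.card G) ∣ Nat.card (commutingPTuples p G h) := by
  induction h, hh using Nat.le_induction generalizing G with
  | base => rw [card_commutingPTuples_one]; exact ordProj_card_dvd_card_isPElement hp G
  | succ h _ ih =>
    cases nonempty_fintype G
    classical
    rw [card_commutingPTuples_succ]
    refine dvd_sum_of_dvd_index_centralizer_mul (fun g x => ?_) (fun g x => ?_) (fun x _ => ?_)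
    · simp only [Finset.mem_filter, Finset.mem_univ, true_and, isPElement_conj_iff]
    · exact (centralizerConjEquiv g x).card_commutingPTuples h |>.symm
    · exact (centralizer {x}).ordProj_card_dvd_index_mul (ih _)

theorem exists_div_eq_div_of_ordProj_dvd (hp : p.Prime) {N n : ℕ} (hn : n ≠ 0)
    (h : ordProj[p] n ∣ N) : ∃ a b : ℤ, ¬ (p : ℤ) ∣ b ∧ (N : ℚ) / n = a / b := by
  obtain ⟨c, rfl⟩ := h
  have hq : ordProj[p] n ≠ 0 := pow_ne_zero _ hp.ne_zero
  have hm := Nat.not_dvd_ordCompl hp hn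
  have hqm := Nat.ordProj_mul_ordCompl_eq_self n p
  generalize ordCompl[p] n = m at *
  generalize ordProj[p] n = q at *
  subst hqm
  refine ⟨c, m, Int.natCast_dvd_natCast.not.mpr hm, ?_⟩
  push_cast
  rw [mul_div_mul_left _ _ (Nat.cast_ne_zero.mpr hq)]

end

/-- For a finite group `G`, a prime `p`, and `h ≥ 1`, the rational number
`|Hom(ℤ_p^h, G)| / |G|` is a `p`-local integer.  Homomorphisms `ℤ_p^h → G` are encoded as
`h`-tuples of pairwise commuting elements of `G`, each of `p`-power order. -/
theorem stmt0 (G : Type*) [Group G] [Fintype G] (p : ℕ) (hp : p.Prime) (h : ℕ) (hh : 1 ≤ h) :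
    ∃ a b : ℤ, ¬ (p : ℤ) ∣ b ∧
      ((Nat.card {v : Fin h → G // (∀ i j, Commute (v i) (v j)) ∧
          ∀ i, ∃ k : ℕ, orderOf (v i) = p ^ k} : ℚ) / (Fintype.card G : ℚ)) = (a : ℚ) / (b : ℚ) := by
  rw [← Nat.card_eq_fintype_card]
  exact exists_div_eq_div_of_ordProj_dvd hp Nat.card_pos.ne'
    (ordProj_card_dvd_card_commutingPTuples hp hh G)
end

section
/- For any finite group G and any positive integer m, the number of elements g ∈ G with g^m = 1 is divisible by gcd(m, |G|). In particular, if m divides |G|, then m divides |{g ∈ G : g^m = 1}| (Frobenius' theorem). -/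
/-!
Write `f_G(n)` for the number of solutions of `x ^ n = 1` in `G`. It depends only on
`gcd(n, |G|)`, so it suffices to prove `p ^ a ∣ f_G(n)` for `n ∣ |G|` and every prime power
`p ^ a ∥ n`, say `n = p ^ a * m`; we argue by induction on `|G|`.

Raising the exponent from `p ^ a * m` to `p ^ (a + 1) * m` adds elements whose order is a
multiple of `p ^ (a + 1)`; grouped by the cyclic subgroup they generate, they come in blocks of
`φ(order)` elements, a multiple of `p ^ a`. Hence `f_G(p ^ a * m) ≡ f_G(p ^ e * m) [MOD p ^ a]`
where `p ^ e ∥ |G|`.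

For `q ∣ |G|` coprime to `m`, each solution of `x ^ (q * m) = 1` factors uniquely as `u * v`
with `u, v` commuting, `u ^ q = 1` and `v ^ m = 1`, so `f_G(q * m) = ∑_{v ^ m = 1} f_{C(v)}(q)`.
A conjugacy class of non-central `v` contributes `|G : C(v)| * f_{C(v)}(q)`, which `q` divides
by induction, so `f_G(q * m) ≡ z * f_G(q) [MOD q]` with `z` the number of central `v` with
`v ^ m = 1`. For `q = p ^ e` and `m = |G| / p ^ e`, Cauchy's theorem makes `z` prime to `p`,
and `f_G(|G|) = |G|` then gives `p ^ e ∣ f_G(p ^ e)`, hence `p ^ e ∣ f_G(p ^ e * m)` for all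
`m` prime to `p`.
-/

open Subgroup

theorem dvd_sum_of_dvd_card_fiber_mul {β γ : Type*} [Fintype β] (g : β → γ) {s : Finset β}
    {F : β → ℕ} {n : ℕ} (hs : ∀ x ∈ s, ∀ y, g y = g x → y ∈ s)
    (hF : ∀ x ∈ s, ∀ y, g y = g x → F y = F x)
    (h : ∀ x ∈ s, n ∣ Nat.card {y // g y = g x} * F x) : n ∣ ∑ x ∈ s, F x := by
  classical
  rw [← Finset.sum_fiberwise_of_maps_to fun x hx => Finset.mem_image_of_mem g hx]
  refine Finset.dvd_sum fun c hc => ?_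
  obtain ⟨x, hx, rfl⟩ := Finset.mem_image.mp hc
  have hfiber : s.filter (fun y => g y = g x) = Finset.univ.filter (fun y => g y = g x) := by
    ext y
    simpa using fun hy => hs x hx y hy
  rw [hfiber, Finset.sum_congr rfl fun y hy => hF x hx y (Finset.mem_filter.mp hy).2,
    Finset.sum_const, smul_eq_mul, ← Fintype.card_subtype, ← Nat.card_eq_fintype_card]
  exact h x hx

theorem Nat.dvd_mul_of_dvd_mul_of_gcd_dvd {q a b c : ℕ} (h : q ∣ a * b) (hc : q.gcd b ∣ c) :
    q ∣ a * c := by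
  have := Nat.dvd_gcd (dvd_mul_left q a) h
  rw [Nat.gcd_mul_left] at this
  exact this.trans (mul_dvd_mul_left a hc)

theorem Nat.pow_succ_dvd_of_dvd_of_not_dvd {p a m d : ℕ} (hp : p.Prime)
    (h : d ∣ p ^ (a + 1) * m) (h' : ¬ d ∣ p ^ a * m) : p ^ (a + 1) ∣ d := by
  have hd : d ≠ 0 := by
    rintro rfl
    exact h' (by simpa [hp.ne_zero] using h)
  obtain ⟨v, d', hd', rfl⟩ := Nat.exists_eq_pow_mul_and_not_dvd hd p hp.ne_one
  have hd'm : d' ∣ m :=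
    ((hp.coprime_iff_not_dvd.mpr hd').symm.pow_right (a + 1)).dvd_of_dvd_mul_left
      (dvd_of_mul_left_dvd h)
  rcases le_or_gt v a with hv | hv
  · exact absurd (mul_dvd_mul (pow_dvd_pow p hv) hd'm) h'
  · exact (pow_dvd_pow p hv).mul_right d'

theorem card_pow_eq_one_congr {G H : Type*} [Group G] [Group H] (e : G ≃* H) (n : ℕ) :
    Nat.card {g : G // g ^ n = 1} = Nat.card {h : H // h ^ n = 1} :=
  Nat.card_congr <| e.toEquiv.subtypeEquiv fun g => by simp [← map_pow]

theorem card_pow_card_eq_one (G : Type*) [Group G] :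
    Nat.card {x : G // x ^ Nat.card G = 1} = Nat.card G :=
  Nat.card_congr (Equiv.subtypeUnivEquiv fun _ => pow_card_eq_one')

theorem card_pow_eq_one_eq_gcd_card (G : Type*) [Group G] [Finite G] (n : ℕ) :
    Nat.card {x : G // x ^ n = 1} = Nat.card {x : G // x ^ n.gcd (Nat.card G) = 1} :=
  Nat.card_congr <| Equiv.subtypeEquivRight fun x => by
    rw [pow_gcd_eq_one]; exact (and_iff_left pow_card_eq_one').symm

theorem card_generators_zpowers {G : Type*} [Group G] [Finite G] (x : G) :
    Nat.card {y : G // zpowers y = zpowers x} = (orderOf x).totient := by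
  classical
  have := Fintype.ofFinite G
  have e : {y : G // zpowers y = zpowers x} ≃ {y : zpowers x // orderOf y = orderOf x} :=
    { toFun := fun y => ⟨⟨y, y.2.le (mem_zpowers _)⟩, by
        rw [Subgroup.orderOf_mk, ← Nat.card_zpowers, y.2, Nat.card_zpowers]⟩
      invFun := fun y => ⟨y, Subgroup.eq_of_le_of_card_ge (zpowers_le.mpr y.1.2) (by
        rw [Nat.card_zpowers, Nat.card_zpowers, Subgroup.orderOf_coe, y.2])⟩
      left_inv := fun y => rfl
      right_inv := fun y => rfl }
  rw [Nat.card_congr e, Nat.card_eq_fintype_card, Fintype.card_subtype,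
    ← Nat.card_zpowers, Nat.card_eq_fintype_card, IsCyclic.card_orderOf_eq_totient dvd_rfl]

theorem card_pow_eq_one_modEq {G : Type*} [Group G] [Finite G] {p : ℕ} (hp : p.Prime)
    (a m : ℕ) :
    Nat.card {x : G // x ^ (p ^ (a + 1) * m) = 1} ≡ Nat.card {x : G // x ^ (p ^ a * m) = 1}
      [MOD p ^ a] := by
  classical
  have := Fintype.ofFinite G
  set S := Finset.univ.filter fun x : G =>
    orderOf x ∣ p ^ (a + 1) * m ∧ ¬ orderOf x ∣ p ^ a * m
  have hsplit : Nat.card {x : G // x ^ (p ^ (a + 1) * m) = 1}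
      = Nat.card {x : G // x ^ (p ^ a * m) = 1} + S.card := by
    simp only [Nat.card_eq_fintype_card, Fintype.card_subtype, ← orderOf_dvd_iff_pow_eq_one, S]
    rw [← Finset.card_filter_add_card_filter_not (fun x : G => orderOf x ∣ p ^ a * m),
      Finset.filter_filter, Finset.filter_filter]
    congr 2
    ext x
    simpa using fun h => h.trans (Dvd.intro_left p (by ring))
  have hS : p ^ a ∣ S.card := by
    rw [Finset.card_eq_sum_ones]
    refine dvd_sum_of_dvd_card_fiber_mul zpowers ?_ (fun _ _ _ _ => rfl) fun x hx => ?_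
    · intro x hx y hy
      simpa [S, ← Nat.card_zpowers, hy] using hx
    · simp only [S, Finset.mem_filter, Finset.mem_univ, true_and] at hx
      rw [card_generators_zpowers, mul_one]
      calc p ^ a ∣ (p ^ (a + 1)).totient := by
            rw [Nat.totient_prime_pow_succ hp]; exact dvd_mul_right _ _
        _ ∣ (orderOf x).totient :=
            Nat.totient_dvd_of_dvd (Nat.pow_succ_dvd_of_dvd_of_not_dvd hp hx.1 hx.2)
  rw [hsplit]
  simpa using (Nat.modEq_zero_iff_dvd.mpr hS).add_left (Nat.card {x : G // x ^ (p ^ a * m) = 1})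

theorem card_pow_eq_one_modEq_of_le {G : Type*} [Group G] [Finite G] {p : ℕ} (hp : p.Prime)
    (m : ℕ) {a b : ℕ} (hab : a ≤ b) :
    Nat.card {x : G // x ^ (p ^ b * m) = 1} ≡ Nat.card {x : G // x ^ (p ^ a * m) = 1}
      [MOD p ^ a] := by
  induction b, hab using Nat.le_induction with
  | base => rfl
  | succ b hab ih => exact ((card_pow_eq_one_modEq hp b m).of_dvd (pow_dvd_pow p hab)).trans ih

theorem card_pow_mul_eq_one_eq_sum {G : Type*} [Group G] [Fintype G] [DecidableEq G] {a b : ℕ}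
    (hab : a.Coprime b) :
    Nat.card {x : G // x ^ (a * b) = 1}
      = ∑ v ∈ Finset.univ.filter (fun v : G => v ^ b = 1),
          Nat.card {u : centralizer {v} // u ^ a = 1} := by
  obtain ⟨α, β, hαβ⟩ := Nat.isCoprime_iff_coprime.mpr hab
  have hpart : ∀ (x : G) (k : ℤ) {c d : ℕ}, x ^ (c * d) = 1 → (x ^ (k * c)) ^ d = 1 := by
    intro x k c d hx
    rw [← zpow_natCast, ← zpow_mul, mul_assoc, ← Nat.cast_mul, mul_comm k, zpow_mul,
      zpow_natCast, hx, one_zpow]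
  have hkill : ∀ (w : G) (k : ℤ) (c : ℕ), w ^ c = 1 → w ^ (k * c) = 1 := fun w k c hw => by
    rw [mul_comm, zpow_mul, zpow_natCast, hw, one_zpow]
  have hkeep : ∀ (w : G) (k l : ℤ) (c : ℕ), k + l * c = 1 → w ^ c = 1 → w ^ k = w :=
    fun w k l c hkl hw => by
      rw [show k = 1 + (-l) * c by linarith, zpow_add, zpow_one, hkill w _ c hw, mul_one]
  have e : {x : G // x ^ (a * b) = 1} ≃
      Σ v : {v : G // v ^ b = 1}, {u : G // Commute u v ∧ u ^ a = 1} :=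
    { toFun := fun x => ⟨⟨x ^ (α * a), hpart x α x.2⟩,
        ⟨x ^ (β * b), (Commute.refl x.1).zpow_zpow _ _,
          hpart x β (by rw [Nat.mul_comm b a]; exact x.2)⟩⟩
      invFun := fun z => ⟨z.2.1 * z.1.1, by
        rw [z.2.2.1.mul_pow, pow_mul, pow_mul', z.2.2.2, z.1.2, one_pow, one_pow, one_mul]⟩
      left_inv := fun x => Subtype.ext <| by
        dsimp only
        rw [← zpow_add, add_comm, hαβ, zpow_one]
      right_inv := by
        rintro ⟨⟨v, hv⟩, ⟨u, hc, hu⟩⟩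
        refine Sigma.subtype_ext (Subtype.ext ?_) ?_
        · simp only
          rw [hc.mul_zpow, hkill u α a hu, one_mul, hkeep v _ β b hαβ hv]
        · simp only
          rw [hc.mul_zpow, hkill v β b hv, mul_one, hkeep u _ α a (by linarith) hu] }
  rw [Nat.card_congr e, Nat.card_sigma,
    Finset.sum_subtype _ (p := fun v : G => v ^ b = 1) fun v => by simp]
  exact Fintype.sum_congr _ _ fun v => Nat.card_congr
    { toFun := fun u =>
        ⟨⟨u.1, mem_centralizer_singleton_iff.mpr u.2.1.eq⟩, Subtype.ext u.2.2⟩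
      invFun := fun u =>
        ⟨u.1, mem_centralizer_singleton_iff.mp u.1.2, congrArg Subtype.val u.2⟩
      left_inv := fun u => rfl
      right_inv := fun u => rfl }

theorem map_conj_centralizer {G : Type*} [Group G] (g v : G) :
    (centralizer {v}).map (MulAut.conj g).toMonoidHom = centralizer {g * v * g⁻¹} := by
  ext x
  simp only [mem_map, mem_centralizer_singleton_iff, MulEquiv.coe_toMonoidHom, MulAut.conj_apply]
  constructor
  · rintro ⟨y, hy, rfl⟩
    rw [show g * y * g⁻¹ * (g * v * g⁻¹) = g * (y * v) * g⁻¹ by group, hy]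
    group
  · intro h
    refine ⟨g⁻¹ * x * g, ?_, by group⟩
    calc g⁻¹ * x * g * v = g⁻¹ * (x * (g * v * g⁻¹)) * g := by group
      _ = g⁻¹ * (g * v * g⁻¹ * x) * g := by rw [h]
      _ = v * (g⁻¹ * x * g) := by group

theorem card_pow_eq_one_centralizer_conj {G : Type*} [Group G] (g v : G) (n : ℕ) :
    Nat.card {u : centralizer {g * v * g⁻¹} // u ^ n = 1}
      = Nat.card {u : centralizer {v} // u ^ n = 1} := by
  rw [← map_conj_centralizer]
  exact (card_pow_eq_one_congr ((MulAut.conj g).subgroupMap _) n).symm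

theorem card_pow_eq_one_centralizer_of_mem_center {G : Type*} [Group G] {v : G}
    (hv : v ∈ center G) (n : ℕ) :
    Nat.card {u : centralizer {v} // u ^ n = 1} = Nat.card {x : G // x ^ n = 1} :=
  card_pow_eq_one_congr ((MulEquiv.subgroupCongr (centralizer_eq_top_iff_subset.mpr
    (Set.singleton_subset_iff.mpr hv))).trans topEquiv) n

theorem card_conjClass_mul_card_centralizer {G : Type*} [Group G] (x : G) :
    Nat.card {y : G // ConjClasses.mk y = ConjClasses.mk x} * Nat.card (centralizer {x})
      = Nat.card G := by
  rw [nat_card_centralizer_nat_card_stabilizer, mul_comm]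
  change _ = Nat.card (ConjAct G)
  rw [← (MulAction.stabilizer (ConjAct G) x).card_mul_index, MulAction.index_stabilizer,
    ← Nat.card_coe_set_eq]
  congr 1
  exact Nat.card_congr <| Equiv.subtypeEquivRight (q := (· ∈ MulAction.orbit (ConjAct G) x))
    fun y => by rw [ConjClasses.mk_eq_mk_iff_isConj, ConjAct.mem_orbit_conjAct, isConj_comm]

theorem card_pow_mul_eq_one_modEq {G : Type*} [Group G] [Finite G] {q m : ℕ}
    (hqm : q.Coprime m) (hq : q ∣ Nat.card G)
    (ih : ∀ H : Subgroup G, H ≠ ⊤ → q.gcd (Nat.card H) ∣ Nat.card {h : H // h ^ q = 1}) :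
    Nat.card {x : G // x ^ (q * m) = 1}
      ≡ Nat.card {z : center G // z ^ m = 1} * Nat.card {x : G // x ^ q = 1} [MOD q] := by
  classical
  have := Fintype.ofFinite G
  rw [card_pow_mul_eq_one_eq_sum hqm,
    ← Finset.sum_filter_add_sum_filter_not _ (· ∈ center G), Finset.filter_filter]
  have hcentral : ∑ v ∈ Finset.univ.filter (fun v : G => v ^ m = 1 ∧ v ∈ center G),
      Nat.card {u : centralizer {v} // u ^ q = 1}
        = Nat.card {z : center G // z ^ m = 1} * Nat.card {x : G // x ^ q = 1} := by
    rw [Finset.sum_congr rfl fun v hv =>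
        card_pow_eq_one_centralizer_of_mem_center (Finset.mem_filter.mp hv).2.2 q,
      Finset.sum_const, smul_eq_mul, ← Fintype.card_subtype, ← Nat.card_eq_fintype_card]
    congr 1
    exact Nat.card_congr
      { toFun := fun v => ⟨⟨v, v.2.2⟩, Subtype.ext v.2.1⟩
        invFun := fun z => ⟨z.1, congrArg Subtype.val z.2, z.1.2⟩
        left_inv := fun v => rfl
        right_inv := fun z => rfl }
  have hconj : ∀ v y : G, ConjClasses.mk y = ConjClasses.mk v → ∃ c : G, c * v * c⁻¹ = y :=
    fun v y h => isConj_iff.mp (ConjClasses.mk_eq_mk_iff_isConj.mp h.symm)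
  have hnoncentral :
      q ∣ ∑ v ∈ (Finset.univ.filter fun v : G => v ^ m = 1).filter (· ∉ center G),
        Nat.card {u : centralizer {v} // u ^ q = 1} := by
    refine dvd_sum_of_dvd_card_fiber_mul ConjClasses.mk ?_ ?_ fun v hv => ?_
    · intro v hv y hy
      obtain ⟨c, rfl⟩ := hconj v y hy
      simp only [Finset.mem_filter, Finset.mem_univ, true_and] at hv ⊢
      refine ⟨by rw [conj_pow, hv.1, mul_one, mul_inv_cancel], fun hc => hv.2 ?_⟩
      simpa [mul_assoc] using (inferInstance : (center G).Normal).conj_mem _ hc c⁻¹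
    · intro v _ y hy
      obtain ⟨c, rfl⟩ := hconj v y hy
      exact card_pow_eq_one_centralizer_conj c v q
    · simp only [Finset.mem_filter, Finset.mem_univ, true_and] at hv
      have hC : centralizer {v} ≠ ⊤ := fun h =>
        hv.2 (centralizer_eq_top_iff_subset.mp h (Set.mem_singleton v))
      refine Nat.dvd_mul_of_dvd_mul_of_gcd_dvd ?_ (ih _ hC)
      rwa [card_conjClass_mul_card_centralizer]
  rw [hcentral]
  simpa using (Nat.modEq_zero_iff_dvd.mpr hnoncentral).add_left
    (Nat.card {z : center G // z ^ m = 1} * Nat.card {x : G // x ^ q = 1})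

theorem coprime_card_of_forall_pow_eq_one {H : Type*} [Group H] [Finite H] {q m : ℕ}
    (hqm : q.Coprime m) (hH : ∀ h : H, h ^ m = 1) : q.Coprime (Nat.card H) := by
  refine Nat.coprime_of_dvd fun r hr hrq hrH => ?_
  have := Fact.mk hr
  obtain ⟨h, hh⟩ := exists_prime_orderOf_dvd_card' r hrH
  exact hr.one_lt.ne' (Nat.eq_one_of_dvd_coprimes hqm hrq (hh ▸ orderOf_dvd_of_pow_eq_one (hH h)))

theorem dvd_card_pow_eq_one_of_coprime {G : Type*} [Group G] [Finite G] {q : ℕ}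
    (hq : q ∣ Nat.card G) (hcop : q.Coprime (Nat.card G / q))
    (ih : ∀ H : Subgroup G, H ≠ ⊤ → q.gcd (Nat.card H) ∣ Nat.card {h : H // h ^ q = 1}) :
    q ∣ Nat.card {x : G // x ^ q = 1} := by
  have key := card_pow_mul_eq_one_modEq hcop hq ih
  rw [Nat.mul_div_cancel' hq, card_pow_card_eq_one] at key
  let K : Subgroup (center G) :=
    { carrier := {z | z ^ (Nat.card G / q) = 1}
      mul_mem' := fun {a b} ha hb => by
        show (a * b) ^ _ = 1
        rw [Commute.mul_pow (mul_comm' a b), ha, hb, one_mul]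
      one_mem' := one_pow _
      inv_mem' := fun {a} ha => show a⁻¹ ^ _ = 1 by rw [inv_pow, ha, inv_one] }
  have hK : q.Coprime (Nat.card K) :=
    coprime_card_of_forall_pow_eq_one hcop fun z => Subtype.ext z.2
  exact hK.dvd_of_dvd_mul_left
    (Nat.modEq_zero_iff_dvd.mp (key.symm.trans (Nat.modEq_zero_iff_dvd.mpr hq)))

theorem dvd_card_pow_eq_one_of_forall_ne_top {G : Type*} [Group G] [Finite G]
    (ih : ∀ H : Subgroup G, H ≠ ⊤ → ∀ n,
      n.gcd (Nat.card H) ∣ Nat.card {h : H // h ^ n = 1})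
    {n : ℕ} (hn : n ∣ Nat.card G) : n ∣ Nat.card {x : G // x ^ n = 1} := by
  have hG : Nat.card G ≠ 0 := Nat.card_pos.ne'
  have hn0 : n ≠ 0 := ne_zero_of_dvd_ne_zero hG hn
  refine (Nat.dvd_iff_prime_pow_dvd_dvd _ n).mpr fun p k hp hpk => ?_
  set a := n.factorization p
  set e := (Nat.card G).factorization p
  set m := ordCompl[p] n
  have hka : k ≤ a := (hp.pow_dvd_iff_le_factorization hn0).mp hpk
  have hae : a ≤ e := (Nat.factorization_le_iff_dvd hn0 hG).mpr hn p
  have hsylow : p ^ e ∣ Nat.card {x : G // x ^ p ^ e = 1} :=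
    dvd_card_pow_eq_one_of_coprime (Nat.ordProj_dvd _ p)
      ((Nat.coprime_ordCompl hp hG).pow_left e) fun H hH => ih H hH _
  have hfull : p ^ e ∣ Nat.card {x : G // x ^ (p ^ e * m) = 1} :=
    (Nat.modEq_zero_iff_dvd.mp ((card_pow_mul_eq_one_modEq
      ((Nat.coprime_ordCompl hp hn0).pow_left e) (Nat.ordProj_dvd _ p) fun H hH => ih H hH _).trans
        (Nat.modEq_zero_iff_dvd.mpr (hsylow.mul_left _))))
  have hn_eq : Nat.card {x : G // x ^ n = 1} = Nat.card {x : G // x ^ (p ^ a * m) = 1} := by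
    rw [Nat.ordProj_mul_ordCompl_eq_self]
  calc p ^ k ∣ p ^ a := pow_dvd_pow p hka
    _ ∣ Nat.card {x : G // x ^ n = 1} := by
      rw [hn_eq, ← Nat.modEq_zero_iff_dvd]
      exact (card_pow_eq_one_modEq_of_le hp m hae).symm.trans
        (Nat.modEq_zero_iff_dvd.mpr ((pow_dvd_pow p hae).trans hfull))

theorem gcd_card_dvd_card_pow_eq_one (G : Type*) [Group G] [Finite G] (n : ℕ) :
    n.gcd (Nat.card G) ∣ Nat.card {x : G // x ^ n = 1} := by
  induction h : Nat.card G using Nat.strong_induction_on generalizing G n with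
  | _ N ih =>
    subst h
    rw [card_pow_eq_one_eq_gcd_card]
    refine dvd_card_pow_eq_one_of_forall_ne_top (fun H hH k => ?_) (Nat.gcd_dvd_right _ _)
    exact ih _ (lt_of_le_of_ne (card_le_card_group H) (mt (card_eq_iff_eq_top H).mp hH)) H k rfl

theorem stmt1_general (G : Type*) [Group G] [Fintype G] (m : ℕ) :
    Nat.gcd m (Fintype.card G) ∣ Nat.card {g : G // g ^ m = 1} ∧
      (m ∣ Fintype.card G → m ∣ Nat.card {g : G // g ^ m = 1}) := by
  have h := gcd_card_dvd_card_pow_eq_one G m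
  rw [Nat.card_eq_fintype_card] at h
  exact ⟨h, fun hm => by rwa [Nat.gcd_eq_left hm] at h⟩

/-- Frobenius' theorem: for a finite group `G` and `m > 0`, the number of
`g ∈ G` with `g ^ m = 1` is divisible by `gcd(m, |G|)`; in particular if `m ∣ |G|` then
`m` divides this count. -/
theorem stmt1 (G : Type*) [Group G] [Fintype G] (m : ℕ) (hm : 0 < m) :
    Nat.gcd m (Fintype.card G) ∣ Nat.card {g : G // g ^ m = 1} ∧
      (m ∣ Fintype.card G → m ∣ Nat.card {g : G // g ^ m = 1}) :=
  stmt1_general G m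
end

section
/- With N^h_{p^d} the number of subgroups of order p^d in (ℚ_p/ℤ_p)^h, we have N^h_{p^d} ≡ 1 (mod p) for all d ≥ 0. -/
/-- `N^h_{p^d}`: the number of subgroups of order `p^d` in `(ℚ_p/ℤ_p)^h`, encoded equivalently
as the number of subgroups of index `p^d` in `ℤ^h`. -/
noncomputable def Nhpd (h p d : ℕ) : ℕ :=
  Nat.card {H : AddSubgroup (Fin h → ℤ) // H.index = p ^ d}

/-!
Every subgroup of index `p^d` in `ℤ^h` contains `p^d ℤ^h`, so it suffices to show that a finite
abelian group `G` with `p^j ∣ |G|` has `≡ 1 (mod p)` subgroups of index `p^j`.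

For `j = 1`, the group `Hom(G, ℤ/p)` is a nontrivial group of exponent `p`, so it has `≡ -1`
nonzero elements, and each subgroup of index `p` is the kernel of exactly `p - 1 ≡ -1` of them.
For the induction step, double count the pairs `H ≤ M` with `[G : H] = p^(j+1)` and `[G : M] = p`:
the `M` above a given `H` are the subgroups of index `p` of `G/H`, and the `H` below a given `M`
are the subgroups of index `p^j` of `M`, so both fibres have `≡ 1` elements.
-/

open Function

section DoubleCounting

variable {α β R : Type*} [Finite α] [Finite β] [Semiring R]

theorem natCast_card_subtype_prod_eq_mul (r : α → β → Prop) {k : R}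
    (h : ∀ a, (Nat.card {b // r a b} : R) = k) :
    (Nat.card {x : α × β // r x.1 x.2} : R) = Nat.card α * k := by
  have := Fintype.ofFinite α
  rw [Nat.card_congr (Equiv.subtypeProdEquivSigmaSubtype r), Nat.card_sigma, Nat.cast_sum,
    Finset.sum_congr rfl fun a _ => h a, Finset.sum_const, Finset.card_univ,
    Nat.card_eq_fintype_card, nsmul_eq_mul]

theorem natCast_card_mul_eq_of_rel (r : α → β → Prop) {k l : R}
    (hα : ∀ a, (Nat.card {b // r a b} : R) = k) (hβ : ∀ b, (Nat.card {a // r a b} : R) = l) :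
    (Nat.card α : R) * k = Nat.card β * l := by
  rw [← natCast_card_subtype_prod_eq_mul r hα, ← natCast_card_subtype_prod_eq_mul (flip r) hβ]
  exact congrArg _ (Nat.card_congr ((Equiv.prodComm α β).subtypeEquiv fun _ => Iff.rfl))

end DoubleCounting

namespace AddSubgroup

variable {G G' : Type*} [AddGroup G] [AddGroup G']

def indexEqEquivOfSurjective {f : G →+ G'} (hf : Surjective f) (n : ℕ) :
    {H : AddSubgroup G // H.index = n ∧ f.ker ≤ H} ≃ {S : AddSubgroup G' // S.index = n} where
  toFun H := ⟨H.1.map f, (index_map_eq _ hf H.2.2).trans H.2.1⟩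
  invFun S := ⟨S.1.comap f, (index_comap_of_surjective _ hf).trans S.2,
    fun x hx => by simp [(f.mem_ker).mp hx]⟩
  left_inv H := Subtype.ext <| by simp [comap_map_eq, sup_of_le_left H.2.2]
  right_inv S := Subtype.ext <| map_comap_eq_self_of_surjective hf S.1

def indexEqEquivQuotient (N : AddSubgroup G) [N.Normal] (n : ℕ) :
    {H : AddSubgroup G // H.index = n ∧ N ≤ H} ≃ {S : AddSubgroup (G ⧸ N) // S.index = n} :=
  (Equiv.subtypeEquivRight fun H => by rw [QuotientAddGroup.ker_mk']).trans
    (indexEqEquivOfSurjective (QuotientAddGroup.mk'_surjective N) n)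

def indexEqEquivOfLE (K : AddSubgroup G) (hK : K.index ≠ 0) (m : ℕ) :
    {H : AddSubgroup G // H.index = m * K.index ∧ H ≤ K} ≃
      {T : AddSubgroup K // T.index = m} :=
  (Equiv.subtypeEquivRight fun _ => and_comm).trans
    ((Equiv.subtypeSubtypeEquivSubtypeInter (· ≤ K) (·.index = m * K.index)).symm.trans
      ((MapSubtype.orderIso K).toEquiv.subtypeEquiv fun T => by
        simp [index_map_subtype, Nat.mul_left_inj hK]).symm)

end AddSubgroup

section IndexPrime

variable {A : Type*} {p : ℕ} [Fact p.Prime]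

namespace AddMonoidHom

variable [AddGroup A]

theorem surjective_of_ne_zero {f : A →+ ZMod p} (hf : f ≠ 0) : Surjective f := by
  have : Fact (Nat.card (ZMod p)).Prime := by rwa [Nat.card_zmod]
  refine (f.range.eq_bot_or_eq_top_of_prime_card).elim (fun h => ?_) range_eq_top.mp
  exact absurd (range_eq_bot_iff.mp h) hf

theorem index_ker_of_ne_zero {f : A →+ ZMod p} (hf : f ≠ 0) : f.ker.index = p := by
  rw [AddSubgroup.index_ker, range_eq_top.mpr (surjective_of_ne_zero hf), AddSubgroup.card_top,
    Nat.card_zmod]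

theorem exists_eq_smul_of_ker_le {n : ℕ} [NeZero n] {f g : A →+ ZMod n} (hf : Surjective f)
    (h : f.ker ≤ g.ker) : ∃ c : ZMod n, g = c • f := by
  obtain ⟨x₀, hx₀⟩ := hf 1
  refine ⟨g x₀, ext fun y => ?_⟩
  have hy : (f y).val • x₀ - y ∈ g.ker := h (by simp [hx₀])
  rw [mem_ker, map_sub, sub_eq_zero, map_nsmul, nsmul_eq_mul, ZMod.natCast_zmod_val] at hy
  rw [smul_apply, smul_eq_mul, ← hy, mul_comm]

end AddMonoidHom

variable [AddCommGroup A]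

theorem AddSubgroup.exists_surjective_ker_eq_of_index_eq {S : AddSubgroup A} (hS : S.index = p) :
    ∃ f : A →+ ZMod p, Surjective f ∧ f.ker = S := by
  have hQ : Nat.card (A ⧸ S) = p := hS
  let e : A ⧸ S ≃+ ZMod p := ((ZMod.ringEquivCongr hQ.symm).toAddEquiv.trans
    (zmodAddCyclicAddEquiv (isAddCyclic_of_prime_card hQ))).symm
  refine ⟨e.toAddMonoidHom.comp (QuotientAddGroup.mk' S),
    e.surjective.comp (QuotientAddGroup.mk'_surjective S), ?_⟩
  ext x
  simp

theorem natCard_ker_fiber_eq_card_units {S : AddSubgroup A} (hS : S.index = p) :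
    Nat.card {f : {f : A →+ ZMod p // f ≠ 0} // f.1.ker = S} = Nat.card (ZMod p)ˣ := by
  obtain ⟨f₀, hf₀, rfl⟩ := S.exists_surjective_ker_eq_of_index_eq hS
  obtain ⟨x₀, hx₀⟩ := hf₀ 1
  have ker_smul (u : (ZMod p)ˣ) : ((u : ZMod p) • f₀).ker = f₀.ker := by
    ext x
    simp
  have smul_ne_zero (u : (ZMod p)ˣ) : (u : ZMod p) • f₀ ≠ 0 := fun h =>
    u.ne_zero (by simpa [hx₀] using DFunLike.congr_fun h x₀)
  refine (Nat.card_eq_of_bijective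
    (fun u => ⟨⟨(u : ZMod p) • f₀, smul_ne_zero u⟩, ker_smul u⟩) ⟨?_, ?_⟩).symm
  · intro u v huv
    have := DFunLike.congr_fun (congrArg (·.1.1) huv) x₀
    exact Units.ext (by simpa [hx₀] using this)
  · rintro ⟨⟨g, hg⟩, hgker⟩
    obtain ⟨c, rfl⟩ := AddMonoidHom.exists_eq_smul_of_ker_le hf₀ hgker.ge
    have hc : c ≠ 0 := by rintro rfl; exact hg (zero_smul _ _)
    exact ⟨Units.mk0 c hc, rfl⟩

theorem exists_addMonoidHom_zmod_ne_zero [Finite A] (hpA : p ∣ Nat.card A) :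
    ∃ f : A →+ ZMod p, f ≠ 0 := by
  -- By Cauchy, `p • ·` is not injective, hence not surjective: `A ⧸ pA` is a nonzero
  -- `ZMod p`-vector space, so it has a nonzero linear form.
  let P := (nsmulAddMonoidHom p : A →+ A).range
  obtain ⟨a, ha⟩ := exists_prime_addOrderOf_dvd_card' p hpA
  have hP : P ≠ ⊤ := by
    intro hP
    have hinj := Finite.injective_iff_surjective.mpr (AddMonoidHom.range_eq_top.mp hP)
    have ha0 : a = 0 := hinj (by simp [← ha])
    exact (Fact.out : p.Prime).one_lt.ne' (by rw [← ha, ha0, addOrderOf_zero])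
  obtain ⟨z, hz⟩ : ∃ z, z ∉ P := by simpa [SetLike.ext_iff] using hP
  have : Module (ZMod p) (A ⧸ P) := QuotientAddGroup.zmodModule fun x => ⟨x, rfl⟩
  obtain ⟨φ, hφ⟩ : ∃ φ : (A ⧸ P) →ₗ[ZMod p] ZMod p, φ (z : A ⧸ P) ≠ 0 := by
    by_contra! h
    exact hz ((QuotientAddGroup.eq_zero_iff z).mp ((Module.forall_dual_apply_eq_zero_iff _ _).mp h))
  exact ⟨φ.toAddMonoidHom.comp (QuotientAddGroup.mk' P),
    fun h => hφ (by simpa using DFunLike.congr_fun h z)⟩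

theorem natCast_card_addMonoidHom_zmod_ne_zero [Finite A] (hpA : p ∣ Nat.card A) :
    (Nat.card {f : A →+ ZMod p // f ≠ 0} : ZMod p) = -1 := by
  classical
  have : Finite (A →+ ZMod p) := Finite.of_injective _ DFunLike.coe_injective
  obtain ⟨f, hf⟩ := exists_addMonoidHom_zmod_ne_zero hpA
  have hf_order : addOrderOf f = p := addOrderOf_eq_prime (by ext; simp) hf
  have hdvd : p ∣ Nat.card (A →+ ZMod p) :=
    (dvd_of_eq hf_order.symm).trans (addOrderOf_dvd_natCard f)
  have := congrArg (Nat.cast : ℕ → ZMod p)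
    (Nat.card_congr (Equiv.optionSubtypeNe (0 : A →+ ZMod p)))
  rw [Finite.card_option, (ZMod.natCast_eq_zero_iff _ _).mpr hdvd, Nat.cast_add,
    Nat.cast_one] at this
  linear_combination this

theorem natCast_card_index_eq_prime [Finite A] (hpA : p ∣ Nat.card A) :
    (Nat.card {S : AddSubgroup A // S.index = p} : ZMod p) = 1 := by
  have : Finite (A →+ ZMod p) := Finite.of_injective _ DFunLike.coe_injective
  have card_units : (Nat.card (ZMod p)ˣ : ZMod p) = -1 := by
    have := congrArg (Nat.cast : ℕ → ZMod p) (Nat.card_eq_card_units_add_one (ZMod p))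
    rw [Nat.card_zmod, ZMod.natCast_self, Nat.cast_add, Nat.cast_one] at this
    linear_combination -this
  have key := natCast_card_mul_eq_of_rel (R := ZMod p) (k := 1) (l := -1)
    (fun (f : {f : A →+ ZMod p // f ≠ 0}) (S : {S : AddSubgroup A // S.index = p}) =>
      f.1.ker = S.1)
    (fun f => by
      have : Nat.card {S : {S : AddSubgroup A // S.index = p} // f.1.ker = S.1} = 1 :=
        Nat.card_eq_one_iff_exists.mpr
          ⟨⟨⟨f.1.ker, AddMonoidHom.index_ker_of_ne_zero f.2⟩, rfl⟩,
            fun S => Subtype.ext (Subtype.ext S.2.symm)⟩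
      rw [this, Nat.cast_one])
    (fun S => by rw [natCard_ker_fiber_eq_card_units S.2, card_units])
  rw [natCast_card_addMonoidHom_zmod_ne_zero hpA] at key
  linear_combination key

end IndexPrime

section IndexPrimePow

variable {p : ℕ} [Fact p.Prime] {G : Type*} [AddCommGroup G] [Finite G]

theorem AddSubgroup.dvd_card_of_mul_index_dvd (K : AddSubgroup G) {n : ℕ}
    (h : n * K.index ∣ Nat.card G) : n ∣ Nat.card K :=
  Nat.dvd_of_mul_dvd_mul_right (Nat.pos_of_ne_zero K.index_ne_zero_of_finite)
    (K.card_mul_index ▸ h)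

theorem natCast_card_index_eq_prime_above (H : AddSubgroup G) (hH : p ∣ H.index) :
    (Nat.card {M : {M : AddSubgroup G // M.index = p} // H ≤ M.1} : ZMod p) = 1 := by
  rw [Nat.card_congr ((Equiv.subtypeSubtypeEquivSubtypeInter _ _).trans
    (H.indexEqEquivQuotient p))]
  exact natCast_card_index_eq_prime hH

theorem natCard_index_eq_mul_below (M : AddSubgroup G) (m : ℕ) :
    Nat.card {H : {H : AddSubgroup G // H.index = m * M.index} // H.1 ≤ M} =
      Nat.card {T : AddSubgroup M // T.index = m} :=
  Nat.card_congr ((Equiv.subtypeSubtypeEquivSubtypeInter _ _).trans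
    (M.indexEqEquivOfLE M.index_ne_zero_of_finite m))

theorem natCast_card_index_eq_prime_pow (j : ℕ) (hj : p ^ j ∣ Nat.card G) :
    (Nat.card {H : AddSubgroup G // H.index = p ^ j} : ZMod p) = 1 := by
  induction j generalizing G with
  | zero => simp [AddSubgroup.index_eq_one]
  | succ j ih =>
    have key := natCast_card_mul_eq_of_rel (R := ZMod p) (k := 1) (l := 1)
      (fun (H : {H : AddSubgroup G // H.index = p ^ j * p})
        (M : {M : AddSubgroup G // M.index = p}) => H.1 ≤ M.1)
      (fun H => natCast_card_index_eq_prime_above H.1 (by rw [H.2]; exact dvd_mul_left p _))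
      (fun M => by
        have fibre := natCard_index_eq_mul_below M.1 (p ^ j)
        rw [M.2] at fibre
        rw [fibre]
        exact ih (M.1.dvd_card_of_mul_index_dvd (by rwa [M.2, ← pow_succ])))
    have hpG : p ∣ Nat.card G := (dvd_pow_self p j.succ_ne_zero).trans hj
    rwa [mul_one, mul_one, natCast_card_index_eq_prime hpG] at key

end IndexPrimePow

namespace AddSubgroup

theorem ker_intCast_compLeft_le {ι : Type*} (H : AddSubgroup (ι → ℤ)) :
    ((Int.castAddHom (ZMod H.index)).compLeft ι).ker ≤ H := by
  intro x hx
  have hdvd (i : ι) : (H.index : ℤ) ∣ x i :=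
    (ZMod.intCast_zmod_eq_zero_iff_dvd _ _).mp (congrFun hx i)
  have hx : x = H.index • fun i => x i / H.index := by
    ext i
    simp [Int.mul_ediv_cancel' (hdvd i)]
  rw [hx]
  exact H.nsmul_index_mem _

def indexEqEquivPiZMod (ι : Type*) (n : ℕ) :
    {H : AddSubgroup (ι → ℤ) // H.index = n} ≃
      {S : AddSubgroup (ι → ZMod n) // S.index = n} :=
  (Equiv.subtypeEquivRight fun H => (and_iff_left_of_imp fun hH =>
    hH ▸ H.ker_intCast_compLeft_le).symm).trans
    (indexEqEquivOfSurjective (f := (Int.castAddHom (ZMod n)).compLeft ι)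
      ZMod.intCast_surjective.comp_left n)

end AddSubgroup

/-- `N^h_{p^d} ≡ 1 (mod p)` for all `d ≥ 0`. -/
theorem stmt3 (p : ℕ) (hp : p.Prime) (h : ℕ) (hh : 1 ≤ h) (d : ℕ) :
    Nhpd h p d % p = 1 % p := by
  have : Fact p.Prime := ⟨hp⟩
  have hdvd : p ^ d ∣ Nat.card (Fin h → ZMod (p ^ d)) := by
    rw [Nat.card_fun, Nat.card_zmod, Nat.card_fin]
    exact dvd_pow_self _ (by omega)
  have key := natCast_card_index_eq_prime_pow d hdvd
  rw [← Nat.card_congr (AddSubgroup.indexEqEquivPiZMod (Fin h) (p ^ d))] at key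
  exact (ZMod.natCast_eq_natCast_iff' _ _ _).mp (key.trans Nat.cast_one.symm)
end

section
/- The sequence (N^h_{p^d})_{d≥0} converges p-adically as d → ∞, with limit 1/((1-p)(1-p^2)⋯(1-p^{h-1})) in ℤ_p. (For h = 1 the limit is 1.) -/
theorem Nat.div_ne_zero_of_mem_divisors {n j : ℕ} (hj : j ∈ n.divisors) : n / j ≠ 0 :=
  (Nat.div_pos (Nat.divisor_le hj) (Nat.pos_of_mem_divisors hj)).ne'

namespace AddSubgroup

variable {A B : Type*} [AddCommGroup A] [AddCommGroup B]

def indexEqEquivOfAddEquiv (e : A ≃+ B) (n : ℕ) :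
    {H : AddSubgroup A // H.index = n} ≃ {H : AddSubgroup B // H.index = n} :=
  e.mapAddSubgroup.toEquiv.subtypeEquiv fun H => by
    simp [AddEquiv.mapAddSubgroup, index_map_equiv]

theorem index_eq_index_comap_inr_mul_index_map_fst (H : AddSubgroup (B × A)) :
    H.index = (H.comap (AddMonoidHom.inr B A)).index * (H.map (AddMonoidHom.fst B A)).index := by
  have h_range : (AddMonoidHom.inr B A).range = (AddMonoidHom.fst B A).ker := by
    ext ⟨b, a⟩
    simp [eq_comm, mem_prod]
  rw [index_comap, h_range, index_map, AddMonoidHom.range_eq_top.2 Prod.fst_surjective,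
    index_top, mul_one, sup_comm, ← relIndex_sup_right, relIndex_mul_index le_sup_right]

theorem eq_zmultiples_index (S : AddSubgroup ℤ) (h : S.index ≠ 0) :
    S = zmultiples (S.index : ℤ) := by
  obtain ⟨a, rfl⟩ := Int.subgroup_cyclic S
  rw [← zmultiples_eq_closure, Int.index_zmultiples] at *
  ext b
  simp [Int.mem_zmultiples_iff]

def intExtension (K : AddSubgroup A) (k : ℕ) (a : A) : AddSubgroup (ℤ × A) :=
  zmultiples ((k : ℤ), a) ⊔ K.map (AddMonoidHom.inr ℤ A)

variable {K : AddSubgroup A} {k : ℕ} {a : A}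

theorem mem_intExtension {x : ℤ × A} :
    x ∈ intExtension K k a ↔ ∃ t : ℤ, x.1 = t * k ∧ x.2 - t • a ∈ K := by
  constructor
  · rintro hx
    obtain ⟨_, ⟨t, rfl⟩, _, ⟨c, hc, rfl⟩, rfl⟩ := mem_sup.1 hx
    exact ⟨t, by simp, by simpa using hc⟩
  · rintro ⟨t, h1, h2⟩
    refine mem_sup.2 ⟨t • ((k : ℤ), a), zsmul_mem_zmultiples _ t, (0, x.2 - t • a),
      mem_map_of_mem _ h2, ?_⟩
    ext <;> simp [h1]

theorem comap_inr_intExtension (hk : k ≠ 0) :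
    (intExtension K k a).comap (AddMonoidHom.inr ℤ A) = K := by
  ext b
  simp [mem_intExtension, hk]

theorem map_fst_intExtension :
    (intExtension K k a).map (AddMonoidHom.fst ℤ A) = zmultiples (k : ℤ) := by
  ext z
  simp only [mem_map, Int.mem_zmultiples_iff, mem_intExtension]
  constructor
  · rintro ⟨x, ⟨t, ht, -⟩, rfl⟩
    exact ⟨t, by simp [ht, mul_comm]⟩
  · rintro ⟨t, rfl⟩
    exact ⟨(k * t, t • a), ⟨t, mul_comm _ _, by simp⟩, rfl⟩

theorem index_intExtension (hk : k ≠ 0) : (intExtension K k a).index = K.index * k := by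
  rw [index_eq_index_comap_inr_mul_index_map_fst, comap_inr_intExtension hk,
    map_fst_intExtension, Int.index_zmultiples, Int.natAbs_natCast]

theorem mk_mem_intExtension_iff (hk : k ≠ 0) {b : A} :
    ((k : ℤ), b) ∈ intExtension K k a ↔ b - a ∈ K := by
  simp [mem_intExtension, hk]

theorem eq_intExtension_of_mem {H : AddSubgroup (ℤ × A)}
    (hH : H.map (AddMonoidHom.fst ℤ A) = zmultiples (k : ℤ)) (ha : ((k : ℤ), a) ∈ H) :
    H = intExtension (H.comap (AddMonoidHom.inr ℤ A)) k a := by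
  ext ⟨z, b⟩
  rw [mem_intExtension]
  constructor
  · intro hx
    obtain ⟨t, rfl⟩ : (k : ℤ) ∣ z := Int.mem_zmultiples_iff.1 (hH ▸ mem_map_of_mem _ hx)
    refine ⟨t, mul_comm _ _, mem_comap.2 ?_⟩
    simpa [mul_comm] using sub_mem hx (zsmul_mem ha t)
  · rintro ⟨t, rfl, ht⟩
    simpa [mul_comm] using add_mem (mem_comap.1 ht) (zsmul_mem ha t)

variable (A) in
noncomputable def intExtensionOfIndex (n : ℕ) :
    (Σ j : n.divisors, Σ K : {K : AddSubgroup A // K.index = j}, A ⧸ K.1) →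
      {H : AddSubgroup (ℤ × A) // H.index = n} :=
  fun x => ⟨intExtension x.2.1 (n / x.1) x.2.2.out, by
    rw [index_intExtension (Nat.div_ne_zero_of_mem_divisors x.1.2), x.2.1.2,
      Nat.mul_div_cancel' (Nat.dvd_of_mem_divisors x.1.2)]⟩

theorem intExtensionOfIndex_injective (n : ℕ) :
    Function.Injective (intExtensionOfIndex A n) := by
  rintro ⟨⟨j, hj⟩, ⟨K, hK⟩, q⟩ ⟨⟨j', hj'⟩, ⟨K', hK'⟩, q'⟩ h
  have hk := Nat.div_ne_zero_of_mem_divisors hj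
  have hk' := Nat.div_ne_zero_of_mem_divisors hj'
  have hext : intExtension K (n / j) q.out = intExtension K' (n / j') q'.out :=
    congrArg Subtype.val h
  obtain rfl : K = K' := calc
    K = (intExtension K (n / j) q.out).comap (AddMonoidHom.inr ℤ A) :=
      (comap_inr_intExtension hk).symm
    _ = K' := by rw [hext, comap_inr_intExtension hk']
  obtain rfl : j = j' := hK.symm.trans hK'
  obtain rfl : q = q' := by
    have hmem := (mk_mem_intExtension_iff hk (a := q.out)).2 (sub_self q.out ▸ K.zero_mem)
    rw [hext, mk_mem_intExtension_iff hk] at hmem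
    rw [← q.out_eq', ← q'.out_eq']
    exact QuotientAddGroup.eq_iff_sub_mem.2 hmem
  rfl

theorem intExtensionOfIndex_surjective {n : ℕ} (hn : n ≠ 0) :
    Function.Surjective (intExtensionOfIndex A n) := by
  rintro ⟨H, hH⟩
  set K := H.comap (AddMonoidHom.inr ℤ A)
  set S := H.map (AddMonoidHom.fst ℤ A)
  have hKS : K.index * S.index = n :=
    (index_eq_index_comap_inr_mul_index_map_fst H).symm.trans hH
  have hj : K.index ∈ n.divisors := Nat.mem_divisors.2 ⟨Dvd.intro _ hKS, hn⟩
  have hS : S.index = n / K.index := by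
    rw [← hKS, Nat.mul_div_cancel_left _ (Nat.pos_of_mem_divisors hj)]
  have hSz : S = zmultiples ((n / K.index : ℕ) : ℤ) :=
    hS ▸ eq_zmultiples_index S (hS ▸ Nat.div_ne_zero_of_mem_divisors hj)
  obtain ⟨⟨_, a⟩, ha, rfl⟩ := mem_map.1 (hSz ▸ mem_zmultiples _ : _ ∈ S)
  refine ⟨⟨⟨K.index, hj⟩, ⟨K, rfl⟩, (a : A ⧸ K)⟩, Subtype.ext ?_⟩
  have ha' : (((n / K.index : ℕ) : ℤ), (a : A ⧸ K).out) ∈ H := by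
    rw [eq_intExtension_of_mem hSz ha, mk_mem_intExtension_iff (Nat.div_ne_zero_of_mem_divisors hj)]
    exact QuotientAddGroup.eq_iff_sub_mem.1 (QuotientAddGroup.out_eq' _)
  exact (eq_intExtension_of_mem hSz ha').symm

instance {n : ℕ} (j : n.divisors) (K : {K : AddSubgroup A // K.index = j}) : K.1.FiniteIndex :=
  ⟨by rw [K.2]; exact (Nat.pos_of_mem_divisors j.2).ne'⟩

theorem finite_index_prod_int {n : ℕ} (hn : n ≠ 0)
    (hfin : ∀ j, j ∣ n → Finite {K : AddSubgroup A // K.index = j}) :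
    Finite {H : AddSubgroup (ℤ × A) // H.index = n} := by
  have : ∀ j : n.divisors, Finite {K : AddSubgroup A // K.index = j} :=
    fun j => hfin j (Nat.dvd_of_mem_divisors j.2)
  exact Finite.of_surjective _ (intExtensionOfIndex_surjective hn)

theorem card_index_prod_int {n : ℕ} (hn : n ≠ 0)
    (hfin : ∀ j, j ∣ n → Finite {K : AddSubgroup A // K.index = j}) :
    Nat.card {H : AddSubgroup (ℤ × A) // H.index = n} =
      ∑ j ∈ n.divisors, j * Nat.card {K : AddSubgroup A // K.index = j} := by
  have : ∀ j : n.divisors, Finite {K : AddSubgroup A // K.index = j} :=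
    fun j => hfin j (Nat.dvd_of_mem_divisors j.2)
  rw [← Nat.card_congr (Equiv.ofBijective _ ⟨intExtensionOfIndex_injective n,
    intExtensionOfIndex_surjective (A := A) hn⟩), Nat.card_sigma,
    ← Finset.sum_coe_sort n.divisors]
  refine Finset.sum_congr rfl fun j _ => ?_
  have := Fintype.ofFinite {K : AddSubgroup A // K.index = j}
  rw [Nat.card_sigma, Nat.card_eq_fintype_card, Fintype.card, mul_comm, ← smul_eq_mul,
    ← Finset.sum_const]
  exact Finset.sum_congr rfl fun K _ => by rw [← index_eq_card, K.2]

end AddSubgroup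

open AddSubgroup in
theorem finite_index_pi_int (h : ℕ) {n : ℕ} (hn : n ≠ 0) :
    Finite {H : AddSubgroup (Fin h → ℤ) // H.index = n} := by
  induction h generalizing n with
  | zero => infer_instance
  | succ h ih =>
    have := finite_index_prod_int hn fun j hj => ih (ne_zero_of_dvd_ne_zero hn hj)
    exact Finite.of_equiv _ (indexEqEquivOfAddEquiv
      (Fin.consLinearEquiv ℤ fun _ : Fin (h + 1) => ℤ).toAddEquiv n)

theorem Nhpd_zero {p : ℕ} (hp : 1 < p) (d : ℕ) : Nhpd 0 p d = if d = 0 then 1 else 0 := by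
  have hone : ∀ H : AddSubgroup (Fin 0 → ℤ), H.index = 1 :=
    fun H => AddSubgroup.index_eq_one.2 (Subsingleton.elim _ _)
  simp only [Nhpd, hone]
  split_ifs with hd
  · simp [hd]
  · simp [(Nat.one_lt_pow hd hp).ne]

theorem Nhpd_succ {p : ℕ} (hp : p.Prime) (h d : ℕ) :
    Nhpd (h + 1) p d = ∑ j ∈ Finset.range (d + 1), p ^ j * Nhpd h p j := by
  have hpd : p ^ d ≠ 0 := pow_ne_zero _ hp.ne_zero
  rw [Nhpd, ← Nat.card_congr (AddSubgroup.indexEqEquivOfAddEquiv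
      (Fin.consLinearEquiv ℤ fun _ : Fin (h + 1) => ℤ).toAddEquiv _),
    AddSubgroup.card_index_prod_int hpd fun j hj =>
      finite_index_pi_int h (ne_zero_of_dvd_ne_zero hpd hj),
    Nat.sum_divisors_prime_pow hp]
  rfl

section PowerSeries

variable {𝕜 : Type*} [NormedField 𝕜]

theorem tsum_pow_mul_sum_range_succ [CompleteSpace 𝕜] {a : ℕ → 𝕜} {t : 𝕜}
    (ht : ‖t‖ < 1) (ha : Summable fun n => ‖t ^ n * a n‖) :
    ∑' n, t ^ n * ∑ j ∈ Finset.range (n + 1), a j = (∑' n, t ^ n * a n) * (1 - t)⁻¹ := by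
  rw [← tsum_geometric_of_norm_lt_one ht, tsum_mul_tsum_eq_tsum_sum_range_of_summable_norm ha
    (summable_norm_geometric_of_norm_lt_one ht)]
  refine tsum_congr fun n => Finset.mul_sum _ _ _ |>.trans <| Finset.sum_congr rfl fun j hj => ?_
  rw [mul_right_comm, ← pow_add, Nat.add_sub_cancel' (Finset.mem_range_succ_iff.1 hj)]

theorem summable_norm_pow_mul_natCast [IsUltrametricDist 𝕜] {t : 𝕜} (ht : ‖t‖ < 1)
    (c : ℕ → ℕ) :
    Summable fun n => ‖t ^ n * (c n : 𝕜)‖ := by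
  refine (summable_norm_geometric_of_norm_lt_one ht).of_nonneg_of_le (fun n => norm_nonneg _)
    fun n => ?_
  rw [norm_mul]
  exact mul_le_of_le_one_right (norm_nonneg _) (IsUltrametricDist.norm_natCast_le_one 𝕜 _)

end PowerSeries

theorem tsum_pow_mul_Nhpd {p : ℕ} [Fact p.Prime] (h : ℕ) {t : ℚ_[p]} (ht : ‖t‖ < 1) :
    ∑' d, t ^ d * (Nhpd h p d : ℚ_[p]) =
      ∏ i ∈ Finset.range h, (1 - (p : ℚ_[p]) ^ i * t)⁻¹ := by
  have hp : p.Prime := Fact.out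
  induction h generalizing t with
  | zero => simp [Nhpd_zero hp.one_lt]
  | succ h ih =>
    have hpt : ‖(p : ℚ_[p]) * t‖ < 1 := by
      rw [norm_mul]
      exact mul_lt_one_of_nonneg_of_lt_one_left (norm_nonneg _) Padic.norm_p_lt_one ht.le
    calc ∑' d, t ^ d * (Nhpd (h + 1) p d : ℚ_[p])
        = ∑' d, t ^ d * ∑ j ∈ Finset.range (d + 1), ((p ^ j * Nhpd h p j : ℕ) : ℚ_[p]) := by
          simp only [Nhpd_succ hp, Nat.cast_sum]
      _ = (∑' j, t ^ j * ((p ^ j * Nhpd h p j : ℕ) : ℚ_[p])) * (1 - t)⁻¹ :=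
          tsum_pow_mul_sum_range_succ ht (summable_norm_pow_mul_natCast ht _)
      _ = (∑' j, ((p : ℚ_[p]) * t) ^ j * (Nhpd h p j : ℚ_[p])) * (1 - t)⁻¹ := by
          simp only [Nat.cast_mul, Nat.cast_pow, mul_pow, mul_assoc, mul_left_comm]
      _ = ∏ i ∈ Finset.range (h + 1), (1 - (p : ℚ_[p]) ^ i * t)⁻¹ := by
          rw [ih hpt, Finset.prod_range_succ']
          simp [pow_succ, mul_assoc]

/-- the sequence `(N^h_{p^d})_d` converges `p`-adically to
`1/((1-p)(1-p^2)⋯(1-p^{h-1}))` (for `h = 1`, the empty product, the limit is `1`). -/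
theorem stmt4 (p : ℕ) [Fact p.Prime] (h : ℕ) (hh : 1 ≤ h) :
    Filter.Tendsto (fun d => (Nhpd h p d : ℚ_[p])) Filter.atTop
      (nhds ((∏ i ∈ Finset.Ico 1 h, (1 - (p : ℚ_[p]) ^ i))⁻¹)) := by
  obtain ⟨m, rfl⟩ : ∃ m, h = m + 1 := ⟨h - 1, by omega⟩
  have hsum : HasSum (fun j => (p : ℚ_[p]) ^ j * (Nhpd m p j : ℚ_[p]))
      (∏ i ∈ Finset.Ico 1 (m + 1), (1 - (p : ℚ_[p]) ^ i))⁻¹ := by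
    have hp : ‖(p : ℚ_[p])‖ < 1 := Padic.norm_p_lt_one
    have hs := (summable_norm_pow_mul_natCast hp (Nhpd m p)).of_norm.hasSum
    rw [tsum_pow_mul_Nhpd m hp] at hs
    simpa [← Finset.prod_inv_distrib, Finset.prod_Ico_eq_prod_range, ← pow_succ, add_comm 1]
      using hs
  refine (hsum.tendsto_sum_nat.comp (Filter.tendsto_add_atTop_nat 1)).congr fun d => ?_
  simp [Nhpd_succ Fact.out]
end

section
/- Let R be a ℤ_{(p)}-algebra (a commutative ring in which every prime other than p is invertible) and M an R-module. In the cokernel M^[p] of the norm map N = Σ_{σ∈Σ_p} σ : M^{⊗p} → (M^{⊗p})^{Σ_p}, the map x ↦ [x^{⊗p}] is additive and its image is killed by p: (x+y)^{[p]} = x^{[p]} + y^{[p]} and p·x^{[p]} = 0. -/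
open scoped TensorProduct

/-- The norm (symmetrization) endomorphism `N = Σ_{σ ∈ Σ_p} σ` of the `p`-fold tensor power
of `M` over `R`, where `Σ_p` permutes the tensor factors. -/
noncomputable def normMap (R : Type*) [CommSemiring R] (M : Type*) [AddCommMonoid M]
    [Module R M] (p : ℕ) :
    (⨂[R] _i : Fin p, M) →ₗ[R] (⨂[R] _i : Fin p, M) :=
  ∑ σ : Equiv.Perm (Fin p), (PiTensorProduct.reindex R (fun _ : Fin p => M) σ).toLinearMap

/-!
Expanding `(x + y)^{⊗p}` multilinearly gives `x^{⊗p} + y^{⊗p}` plus, for each `0 < k < p`, the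
sum of the tensors carrying `x` in the positions of a `k`-subset and `y` elsewhere. The symmetric
group permutes the `k`-subsets transitively, with stabilizers of order `k! (p - k)!`, so the norm of
any one of these tensors is `k! (p - k)!` times that sum; and `k! (p - k)!` is a unit in `R`, all of
its prime factors being `< p`. Similarly `N(x^{⊗p}) = p! x^{⊗p} = (p - 1)! • p x^{⊗p}` with
`(p - 1)!` a unit.
-/

open scoped Nat Pointwise
open Finset
open Equiv (Perm)

section GroupAction

variable {G X : Type*} [Group G] [Fintype G] [MulAction G X] [DecidableEq X]

theorem card_filter_smul_eq_smul (b : X) (τ : G) :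
    #{g : G | g • b = τ • b} = #{g : G | g • b = b} := by
  refine card_nbij' (τ⁻¹ * ·) (τ * ·) (fun g hg => ?_) (fun g hg => ?_)
    (fun g _ => mul_inv_cancel_left τ g) (fun g _ => inv_mul_cancel_left τ g)
  · simp only [coe_filter, mem_univ, true_and, Set.mem_ofPred_eq] at hg ⊢
    rw [mul_smul, hg, inv_smul_smul]
  · simp only [coe_filter, mem_univ, true_and, Set.mem_ofPred_eq] at hg ⊢
    rw [mul_smul, hg]

theorem sum_comp_smul_eq_nsmul_sum_image {A : Type*} [AddCommMonoid A] (b : X) (f : X → A) :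
    ∑ g : G, f (g • b) =
      #{g : G | g • b = b} • ∑ y ∈ univ.image (fun g : G => g • b), f y := by
  rw [Finset.sum_comp, smul_sum]
  refine sum_congr rfl fun y hy => ?_
  obtain ⟨τ, -, rfl⟩ := mem_image.1 hy
  rw [card_filter_smul_eq_smul]

end GroupAction

section PermFinset

variable {α : Type*} [DecidableEq α]

theorem piecewise_const_comp_symm {β : Type*} (s : Finset α) (σ : Perm α) (a b : β) :
    s.piecewise (fun _ => a) (fun _ => b) ∘ σ.symm =
      (σ • s).piecewise (fun _ => a) (fun _ => b) := by
  funext i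
  simp only [Function.comp_apply, piecewise, ← Finset.inv_smul_mem_iff, Perm.smul_def,
    Perm.inv_def]

variable [Fintype α]

theorem image_smul_finset_eq_powersetCard (s : Finset α) :
    univ.image (fun σ : Perm α => σ • s) = powersetCard #s univ := by
  ext t
  simp only [mem_image, mem_univ, true_and, mem_powersetCard_univ]
  constructor
  · rintro ⟨σ, rfl⟩
    exact card_smul_finset σ s
  · intro ht
    have := Set.powersetCard.isPretransitive (α := α) (n := #s)
    obtain ⟨σ, hσ⟩ := MulAction.exists_smul_eq (Perm α)
      (⟨s, rfl⟩ : Set.powersetCard α #s) ⟨t, ht⟩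
    exact ⟨σ, congrArg Subtype.val hσ⟩

theorem card_filter_smul_finset_eq_self (s : Finset α) :
    #{σ : Perm α | σ • s = s} = (#s)! * (Fintype.card α - #s)! := by
  have h := sum_comp_smul_eq_nsmul_sum_image (G := Perm α) s (fun _ => 1)
  simp only [sum_const, card_univ, Fintype.card_perm, smul_eq_mul, mul_one,
    image_smul_finset_eq_powersetCard, card_powersetCard] at h
  have hs : #s ≤ Fintype.card α := card_le_univ s
  apply Nat.eq_of_mul_eq_mul_left (Nat.choose_pos hs)
  rw [← mul_assoc, Nat.choose_mul_factorial_mul_factorial hs, h, mul_comm]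

end PermFinset

section Units

variable {R : Type*} [Semiring R] {p : ℕ}

theorem isUnit_natCast_of_pos_of_lt (hR : ∀ q : ℕ, q.Prime → q ≠ p → IsUnit (q : R))
    {m : ℕ} (hm : 0 < m) (hmp : m < p) : IsUnit (m : R) := by
  induction m using Nat.recOnMul with
  | zero => omega
  | one => simp
  | prime q hq => exact hR q hq hmp.ne
  | mul a b ha hb =>
    have ha0 : 0 < a := Nat.pos_of_mul_pos_right hm
    have hb0 : 0 < b := Nat.pos_of_mul_pos_left hm
    rw [Nat.cast_mul]
    exact (ha ha0 ((Nat.le_mul_of_pos_right a hb0).trans_lt hmp)).mul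
      (hb hb0 ((Nat.le_mul_of_pos_left b ha0).trans_lt hmp))

theorem isUnit_factorial_of_lt (hR : ∀ q : ℕ, q.Prime → q ≠ p → IsUnit (q : R))
    {m : ℕ} (hmp : m < p) : IsUnit (m ! : R) := by
  induction m with
  | zero => simp
  | succ m ih =>
    rw [Nat.factorial_succ, Nat.cast_mul]
    exact (isUnit_natCast_of_pos_of_lt hR m.succ_pos hmp).mul (ih (by omega))

end Units

section NormMap

variable {R : Type*} [CommSemiring R] {M : Type*} [AddCommMonoid M] [Module R M] {p : ℕ}

theorem normMap_tprod (f : Fin p → M) :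
    normMap R M p (PiTensorProduct.tprod R f) =
      ∑ σ : Perm (Fin p), PiTensorProduct.tprod R (f ∘ σ.symm) := by
  simp only [normMap, LinearMap.sum_apply, LinearEquiv.coe_coe, PiTensorProduct.reindex_tprod]
  rfl

theorem normMap_tprod_piecewise (x y : M) (s : Finset (Fin p)) :
    normMap R M p (PiTensorProduct.tprod R (s.piecewise (fun _ => x) (fun _ => y))) =
      ((#s)! * (p - #s)!) •
        ∑ t ∈ powersetCard #s univ,
          PiTensorProduct.tprod R (t.piecewise (fun _ => x) (fun _ => y)) := by
  rw [normMap_tprod]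
  simp_rw [piecewise_const_comp_symm]
  rw [sum_comp_smul_eq_nsmul_sum_image s
      (fun t => PiTensorProduct.tprod R (t.piecewise (fun _ => x) (fun _ => y))),
    image_smul_finset_eq_powersetCard, card_filter_smul_finset_eq_self, Fintype.card_fin]

theorem normMap_tprod_const (x : M) :
    normMap R M p (PiTensorProduct.tprod R fun _ => x) =
      p ! • PiTensorProduct.tprod R fun _ => x := by
  simp [normMap_tprod, Function.comp_def, Fintype.card_perm]

theorem tprod_const_add_eq_sum_powersetCard (x y : M) :
    (PiTensorProduct.tprod R fun _ : Fin p => x + y) =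
      ∑ k ∈ range (p + 1), ∑ t ∈ powersetCard k univ,
        PiTensorProduct.tprod R (t.piecewise (fun _ => x) (fun _ => y)) := by
  rw [show (fun _ : Fin p => x + y) = (fun _ => x) + (fun _ => y) from rfl,
    MultilinearMap.map_add_univ, ← powerset_univ, sum_powerset, card_univ, Fintype.card_fin]

variable (hR : ∀ q : ℕ, q.Prime → q ≠ p → IsUnit (q : R))
include hR

theorem sum_tprod_piecewise_mem_range_normMap (x y : M) {k : ℕ} (hk : 0 < k) (hkp : k < p) :
    ∑ t ∈ powersetCard k univ,
        PiTensorProduct.tprod R (t.piecewise (fun _ => x) (fun _ => y)) ∈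
      LinearMap.range (normMap R M p) := by
  obtain ⟨s, -, rfl⟩ := exists_subset_card_eq (s := (univ : Finset (Fin p)))
    (by simpa using hkp.le)
  have hunit : IsUnit (((#s)! * (p - #s)! : ℕ) : R) := by
    rw [Nat.cast_mul]
    exact (isUnit_factorial_of_lt hR hkp).mul (isUnit_factorial_of_lt hR (by omega))
  rw [← Submodule.smul_mem_iff_of_isUnit _ hunit, Nat.cast_smul_eq_nsmul,
    ← normMap_tprod_piecewise]
  exact LinearMap.mem_range_self _ _

theorem nsmul_tprod_const_mem_range_normMap (hp : p ≠ 0) (x : M) :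
    p • (PiTensorProduct.tprod R fun _ : Fin p => x) ∈ LinearMap.range (normMap R M p) := by
  have hunit : IsUnit (((p - 1)! : ℕ) : R) := isUnit_factorial_of_lt hR (by omega)
  rw [← Submodule.smul_mem_iff_of_isUnit _ hunit, Nat.cast_smul_eq_nsmul, smul_smul,
    mul_comm, Nat.mul_factorial_pred hp, ← normMap_tprod_const]
  exact LinearMap.mem_range_self _ _

end NormMap

section Quotient

variable {R : Type*} [CommRing R] {M : Type*} [AddCommGroup M] [Module R M] {p : ℕ}

theorem mk_tprod_const_add (hR : ∀ q : ℕ, q.Prime → q ≠ p → IsUnit (q : R)) (hp : p ≠ 0)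
    (x y : M) :
    Submodule.Quotient.mk (p := LinearMap.range (normMap R M p))
        (PiTensorProduct.tprod R fun _ : Fin p => x + y) =
      Submodule.Quotient.mk (p := LinearMap.range (normMap R M p))
          (PiTensorProduct.tprod R fun _ : Fin p => x) +
        Submodule.Quotient.mk (p := LinearMap.range (normMap R M p))
          (PiTensorProduct.tprod R fun _ : Fin p => y) := by
  have hmixed : ∑ k ∈ Ico 1 p, ∑ t ∈ powersetCard k univ,
      PiTensorProduct.tprod R (t.piecewise (fun _ => x) (fun _ => y)) ∈
        LinearMap.range (normMap R M p) :=
    sum_mem fun k hk => sum_tprod_piecewise_mem_range_normMap hR x y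
      (mem_Ico.1 hk).1 (mem_Ico.1 hk).2
  rw [← Submodule.Quotient.mk_add, Submodule.Quotient.eq, tprod_const_add_eq_sum_powersetCard,
    sum_range_succ, sum_range_eq_add_Ico _ (Nat.pos_of_ne_zero hp), powersetCard_zero,
    sum_singleton, piecewise_empty]
  have hfull : powersetCard p (univ : Finset (Fin p)) = {univ} := by
    simpa using powersetCard_self (univ : Finset (Fin p))
  rw [hfull, sum_singleton, piecewise_univ]
  convert hmixed using 1
  abel

end Quotient

/-- over a `ℤ_(p)`-algebra `R` (every prime `q ≠ p` is invertible in `R`),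
in the cokernel `M^[p]` of the norm map on the `p`-th tensor power of an `R`-module `M`,
the map `x ↦ x^{[p]} = [x ⊗ ⋯ ⊗ x]` is additive and its values are killed by `p`.
(The cokernel of `N : M^{⊗p} → (M^{⊗p})^{Σ_p}` is identified with the quotient of `M^{⊗p}`
by the image of `N`, the image of `N` being contained in the invariants.) -/
theorem stmt6 (p : ℕ) (hp : p.Prime) (R : Type*) [CommRing R]
    (hR : ∀ q : ℕ, q.Prime → q ≠ p → IsUnit (q : R))
    (M : Type*) [AddCommGroup M] [Module R M] :
    (∀ x y : M,
      Submodule.Quotient.mk (p := LinearMap.range (normMap R M p))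
          (PiTensorProduct.tprod R fun _ : Fin p => x + y) =
        Submodule.Quotient.mk (p := LinearMap.range (normMap R M p))
            (PiTensorProduct.tprod R fun _ : Fin p => x) +
          Submodule.Quotient.mk (p := LinearMap.range (normMap R M p))
            (PiTensorProduct.tprod R fun _ : Fin p => y)) ∧
    (∀ x : M,
      p • Submodule.Quotient.mk (p := LinearMap.range (normMap R M p))
          (PiTensorProduct.tprod R fun _ : Fin p => x) = 0) := by
  refine ⟨mk_tprod_const_add hR hp.ne_zero, fun x => ?_⟩
  rw [← Submodule.Quotient.mk_smul, Submodule.Quotient.mk_eq_zero]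
  exact nsmul_tprod_const_mem_range_normMap hR hp.ne_zero x
end

section
/- (Wohlfahrt's identity) For any finite group G, the exponential generating function identity Σ_{m≥0} (|Hom(G, Σ_m)|/m!) X^m = exp(Σ_{H ≤ G} X^{[G:H]}/[G:H]) holds in ℚ[[X]], where the sum on the right runs over all subgroups H of G. -/
/-!
Both sides solve `F' = g' F`, `F(0) = 1`, where `g = ∑_H X^[G:H] / [G:H]` and hence
`g' = ∑_H X^([G:H] - 1)`; over `ℚ` this initial value problem has a unique solution. For `exp g`
it is the chain rule. For the left side it is the recursion
`|Hom(G, Σ_{n+1})| = ∑_H n (n-1) ⋯ (n - [G:H] + 2) |Hom(G, Σ_{n+1-[G:H]})|`: an action on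
`{0, …, n}` splits into the orbit of `0`, which is `G ⧸ H` for the stabiliser `H` of `0`,
embedded so that the trivial coset goes to `0`, and an arbitrary action on the complement of
that orbit.
-/

open PowerSeries

/-- `exp(g)` of a power series `g` with zero constant term over a `ℚ`-algebra,
defined coefficientwise. -/
noncomputable def expPS (A : Type*) [CommRing A] [Algebra ℚ A] (g : PowerSeries A) :
    PowerSeries A :=
  PowerSeries.mk fun n =>
    ∑ k ∈ Finset.range (n + 1), ((k.factorial : ℚ)⁻¹) • (PowerSeries.coeff n (g ^ k))

open Finset Equiv

namespace PowerSeries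

variable {A : Type*} [CommRing A]

lemma coeff_mul_eq_of_coeff_eq {n : ℕ} (f : A⟦X⟧) {p q : A⟦X⟧}
    (h : ∀ k ≤ n, coeff k p = coeff k q) : coeff n (f * p) = coeff n (f * q) := by
  simp only [coeff_mul]
  refine sum_congr rfl fun x hx => ?_
  rw [h x.2 (by have := mem_antidiagonal.mp hx; omega)]

lemma coeff_pow_eq_zero_of_lt {g : A⟦X⟧} (hg : constantCoeff g = 0) {n k : ℕ} (h : n < k) :
    coeff n (g ^ k) = 0 := by
  obtain ⟨g, rfl⟩ := X_dvd_iff.mpr hg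
  rw [mul_pow, coeff_X_pow_mul', if_neg (by omega)]

lemma eq_of_derivative_eq_mul_self [IsAddTorsionFree A] {h F E : A⟦X⟧} (hF : d⁄dX A F = h * F)
    (hE : d⁄dX A E = h * E) (h0 : constantCoeff F = constantCoeff E) : F = E := by
  ext n
  induction n using Nat.strong_induction_on with
  | _ n ih =>
    rcases n with _ | n
    · simpa using h0
    · have hn : coeff n (d⁄dX A F) = coeff n (d⁄dX A E) := by
        rw [hF, hE]
        exact coeff_mul_eq_of_coeff_eq h fun k hk => ih k (by omega)
      simp only [coeff_derivative, ← Nat.cast_succ, ← nsmul_eq_mul'] at hn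
      exact nsmul_right_injective n.succ_ne_zero hn

variable [Algebra ℚ A]

noncomputable def expPartialSum (g : A⟦X⟧) (N : ℕ) : A⟦X⟧ :=
  ∑ k ∈ range N, (k.factorial : ℚ)⁻¹ • g ^ k

lemma coeff_expPS_eq_coeff_expPartialSum {g : A⟦X⟧} (hg : constantCoeff g = 0) {n N : ℕ}
    (hn : n < N) : coeff n (expPS A g) = coeff n (expPartialSum g N) := by
  rw [expPS, coeff_mk, expPartialSum, map_sum]
  refine sum_subset_zero_on_sdiff (range_subset_range.mpr hn) (fun k hk => ?_) (fun k _ => ?_)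
  · simp only [mem_sdiff, mem_range] at hk
    rw [coeff_smul, coeff_pow_eq_zero_of_lt hg (by omega), smul_zero]
  · rw [coeff_smul]

lemma derivative_expPartialSum_succ (g : A⟦X⟧) (N : ℕ) :
    d⁄dX A (expPartialSum g (N + 1)) = d⁄dX A g * expPartialSum g N := by
  rw [expPartialSum, expPartialSum, map_sum, sum_range_succ', mul_sum]
  simp only [pow_zero, Derivation.map_smul_of_tower, Derivation.map_one_eq_zero, smul_zero,
    add_zero]
  refine sum_congr rfl fun k _ => ?_
  rw [derivative_pow, Nat.add_sub_cancel, mul_assoc, ← nsmul_eq_mul,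
    ← Nat.cast_smul_eq_nsmul ℚ, smul_smul, mul_comm (g ^ k), mul_smul_comm, Nat.factorial_succ]
  congr 2
  push_cast
  field_simp

lemma derivative_expPS {g : A⟦X⟧} (hg : constantCoeff g = 0) :
    d⁄dX A (expPS A g) = d⁄dX A g * expPS A g := by
  ext n
  calc coeff n (d⁄dX A (expPS A g))
      = coeff n (d⁄dX A (expPartialSum g (n + 2))) := by
        rw [coeff_derivative, coeff_derivative,
          coeff_expPS_eq_coeff_expPartialSum hg (N := n + 2) (by omega)]
    _ = coeff n (d⁄dX A g * expPS A g) := by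
        rw [derivative_expPartialSum_succ]
        exact coeff_mul_eq_of_coeff_eq _ fun k hk =>
          (coeff_expPS_eq_coeff_expPartialSum hg (by omega)).symm

lemma constantCoeff_expPS (g : A⟦X⟧) : constantCoeff (expPS A g) = 1 := by
  rw [← coeff_zero_eq_constantCoeff_apply]
  simp [expPS]

end PowerSeries

noncomputable def pointedEmbeddingEquiv {A β : Type*} [DecidableEq A] (a : A) (b : β) :
    {ι : A ↪ β // ι a = b} ≃ ({x // x ≠ a} ↪ {y // y ≠ b}) where
  toFun ι := ι.1.subtypeMap fun x hx h => hx (ι.1.injective (h.trans ι.2.symm))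
  invFun f := ⟨(optionSubtypeNe a).symm.toEmbedding.trans
      ((f.trans (Function.Embedding.subtype _)).optionElim b
        (by simpa using fun x hx => (f ⟨x, hx⟩).2)), by simp⟩
  left_inv ι := by
    ext x
    by_cases hx : x = a
    · subst hx; simp [ι.2]
    · simp [optionSubtypeNe_symm_of_ne hx]; rfl
  right_inv f := by ext x; simp [Function.Embedding.subtypeMap, x.2]

lemma card_pointedEmbedding {A β : Type*} [Finite A] [Finite β] (a : A) (b : β) :
    Nat.card {ι : A ↪ β // ι a = b} = (Nat.card β - 1).descFactorial (Nat.card A - 1) := by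
  classical
  have := Fintype.ofFinite A
  have := Fintype.ofFinite β
  rw [Nat.card_congr (pointedEmbeddingEquiv a b), Nat.card_eq_fintype_card,
    Fintype.card_embedding_eq]
  simp [Fintype.card_subtype_compl, Nat.card_eq_fintype_card]

section OrbitDecomposition

variable {G α : Type*} [Group G]

open scoped Classical in
noncomputable def extendCosetAction {H : Subgroup G} (ι : G ⧸ H ↪ α)
    (ψ : G →* Perm {x // x ∉ Set.range ι}) : G →* Perm α :=
  (Perm.subtypeCongrHom (· ∈ Set.range ι)).comp
    ((((ofInjective ι ι.injective).permCongrHom : Perm (G ⧸ H) →* Perm (Set.range ι)).comp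
      (MulAction.toPermHom G (G ⧸ H))).prod ψ)

lemma extendCosetAction_apply_coset {H : Subgroup G} (ι : G ⧸ H ↪ α)
    (ψ : G →* Perm {x // x ∉ Set.range ι}) (g : G) (q : G ⧸ H) :
    extendCosetAction ι ψ g (ι q) = ι (g • q) := by
  classical
  simp [extendCosetAction, Perm.subtypeCongr.left_apply _ _ (Set.mem_range_self q)]

lemma extendCosetAction_apply_compl {H : Subgroup G} (ι : G ⧸ H ↪ α)
    (ψ : G →* Perm {x // x ∉ Set.range ι}) (g : G) (x : {x // x ∉ Set.range ι}) :
    extendCosetAction ι ψ g x = ψ g x := by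
  classical
  simp [extendCosetAction, Perm.subtypeCongr.right_apply _ _ x.2]

def stabilizerOf (φ : G →* Perm α) (a : α) : Subgroup G :=
  (MulAction.stabilizer (Perm α) a).comap φ

@[simp] lemma mem_stabilizerOf {φ : G →* Perm α} {a : α} {g : G} :
    g ∈ stabilizerOf φ a ↔ φ g a = a := Iff.rfl

def orbitEmbedding (φ : G →* Perm α) (a : α) : G ⧸ stabilizerOf φ a ↪ α :=
  letI := MulAction.compHom α φ
  ⟨MulAction.ofQuotientStabilizer G a, MulAction.injective_ofQuotientStabilizer G a⟩

@[simp] lemma orbitEmbedding_mk (φ : G →* Perm α) (a : α) (g : G) :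
    orbitEmbedding φ a g = φ g a := rfl

lemma apply_mem_range_orbitEmbedding {φ : G →* Perm α} {a x : α} (g : G)
    (hx : x ∈ Set.range (orbitEmbedding φ a)) : φ g x ∈ Set.range (orbitEmbedding φ a) := by
  obtain ⟨q, rfl⟩ := hx
  induction q using QuotientGroup.induction_on with | H h =>
  exact ⟨(g * h : G), by simp⟩

lemma apply_mem_range_orbitEmbedding_iff {φ : G →* Perm α} {a x : α} (g : G) :
    φ g x ∈ Set.range (orbitEmbedding φ a) ↔ x ∈ Set.range (orbitEmbedding φ a) :=
  ⟨fun h => by simpa using apply_mem_range_orbitEmbedding g⁻¹ h,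
    apply_mem_range_orbitEmbedding g⟩

def restrictOrbitCompl (φ : G →* Perm α) (a : α) :
    G →* Perm {x // x ∉ Set.range (orbitEmbedding φ a)} where
  toFun g := (φ g).subtypePerm fun _ => (apply_mem_range_orbitEmbedding_iff g).not
  map_one' := by ext; simp
  map_mul' g h := by
    ext x
    change φ (g * h) x = φ g (φ h x)
    rw [map_mul, Perm.mul_apply]

lemma extendCosetAction_restrictOrbitCompl (φ : G →* Perm α) (a : α) :
    extendCosetAction (orbitEmbedding φ a) (restrictOrbitCompl φ a) = φ := by
  ext g x
  by_cases hx : x ∈ Set.range (orbitEmbedding φ a)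
  · obtain ⟨q, rfl⟩ := hx
    induction q using QuotientGroup.induction_on with | H h =>
    rw [extendCosetAction_apply_coset]
    simp
  · exact extendCosetAction_apply_compl _ _ g ⟨x, hx⟩

lemma stabilizerOf_extendCosetAction {H : Subgroup G} (ι : G ⧸ H ↪ α)
    (ψ : G →* Perm {x // x ∉ Set.range ι}) {a : α} (hι : ι (1 : G) = a) :
    stabilizerOf (extendCosetAction ι ψ) a = H := by
  ext g
  rw [mem_stabilizerOf, ← hι, extendCosetAction_apply_coset, ι.injective.eq_iff,
    MulAction.Quotient.smul_mk, smul_eq_mul, mul_one, QuotientGroup.eq]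
  simp

variable (G) in
/-- A permutation action of `G` viewed from a base point `a`: the stabiliser `H` of `a`, the orbit
of `a` as an embedding of `G ⧸ H` sending the trivial coset to `a`, and the action on the rest. -/
abbrev CosetOrbitData (a : α) : Type _ :=
  Σ H : Subgroup G, Σ ι : {ι : G ⧸ H ↪ α // ι (1 : G) = a},
    G →* Perm {x // x ∉ Set.range ι.1}

lemma extendCosetAction_injective (a : α) :
    Function.Injective fun t : CosetOrbitData G a => extendCosetAction t.2.1.1 t.2.2 := by
  rintro ⟨H, ⟨ι, hι⟩, ψ⟩ ⟨H', ⟨ι', hι'⟩, ψ'⟩ h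
  dsimp only at h
  obtain rfl : H = H' := by
    rw [← stabilizerOf_extendCosetAction ι ψ hι, h,
      stabilizerOf_extendCosetAction ι' ψ' hι']
  obtain rfl : ι = ι' := by
    ext q
    induction q using QuotientGroup.induction_on with | H g =>
    have hq : ((g : G) : G ⧸ H) = g • ((1 : G) : G ⧸ H) := by simp
    rw [hq, ← extendCosetAction_apply_coset ι ψ, ← extendCosetAction_apply_coset ι' ψ', hι,
      hι', h]
  obtain rfl : ψ = ψ' := by
    ext g x
    rw [← extendCosetAction_apply_compl, h, extendCosetAction_apply_compl]
  rfl

lemma extendCosetAction_surjective (a : α) :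
    Function.Surjective fun t : CosetOrbitData G a => extendCosetAction t.2.1.1 t.2.2 := fun φ =>
  ⟨⟨stabilizerOf φ a, ⟨orbitEmbedding φ a, by simp⟩, restrictOrbitCompl φ a⟩,
    extendCosetAction_restrictOrbitCompl φ a⟩

noncomputable def cosetOrbitDataEquiv (a : α) : CosetOrbitData G a ≃ (G →* Perm α) :=
  .ofBijective _ ⟨extendCosetAction_injective a, extendCosetAction_surjective a⟩

end OrbitDecomposition

instance {M N : Type*} [MulOneClass M] [MulOneClass N] [Finite M] [Finite N] : Finite (M →* N) :=
  .of_injective _ DFunLike.coe_injective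

lemma card_compl_range_embedding {α β : Type*} [Finite α] (f : β ↪ α) :
    Nat.card {x // x ∉ Set.range f} = Nat.card α - Nat.card β := by
  classical
  have := Fintype.ofFinite α
  have := Fintype.ofInjective f f.injective
  simp only [Nat.card_eq_fintype_card, Fintype.card_subtype_compl]
  rw [← Set.card_range_of_injective f.injective]

lemma card_monoidHom_perm_congr {G α β : Type*} [Group G] (e : α ≃ β) :
    Nat.card (G →* Perm α) = Nat.card (G →* Perm β) :=
  Nat.card_congr (MulEquiv.monoidHomCongrRightEquiv e.permCongrHom)

lemma card_monoidHom_perm {G α : Type*} [Group G] [Finite G] [Finite α] (a : α) :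
    Nat.card (G →* Perm α) = ∑ᶠ H : Subgroup G,
      Nat.card {ι : G ⧸ H ↪ α // ι (1 : G) = a} *
        Nat.card (G →* Perm (Fin (Nat.card α - H.index))) := by
  have := Fintype.ofFinite (Subgroup G)
  rw [← Nat.card_congr (cosetOrbitDataEquiv a), Nat.card_sigma, finsum_eq_sum_of_fintype]
  refine Finset.sum_congr rfl fun H _ => ?_
  have := Fintype.ofFinite {ι : G ⧸ H ↪ α // ι (1 : G) = a}
  rw [Nat.card_sigma, Nat.card_eq_fintype_card, ← Finset.card_univ]
  exact Finset.sum_const_nat fun ι _ =>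
    card_monoidHom_perm_congr (Finite.equivFinOfCardEq (card_compl_range_embedding ι.1))

lemma card_monoidHom_perm_fin_succ {G : Type*} [Group G] [Finite G] (n : ℕ) :
    Nat.card (G →* Perm (Fin (n + 1))) = ∑ᶠ H : Subgroup G,
      n.descFactorial (H.index - 1) * Nat.card (G →* Perm (Fin (n - (H.index - 1)))) := by
  rw [card_monoidHom_perm (0 : Fin (n + 1))]
  refine finsum_congr fun H => ?_
  have : H.index ≠ 0 := Subgroup.index_ne_zero_of_finite
  rw [card_pointedEmbedding, Nat.card_fin, ← Subgroup.index, Nat.add_sub_cancel,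
    show n + 1 - H.index = n - (H.index - 1) by omega]

lemma descFactorial_div_factorial {K : Type*} [Field K] [CharZero K] (n j : ℕ) :
    (n.descFactorial j : K) / n.factorial =
      if j ≤ n then ((n - j).factorial : K)⁻¹ else 0 := by
  split_ifs with h
  · have : (n.descFactorial j : K) ≠ 0 := by exact_mod_cast (Nat.descFactorial_pos.mpr h).ne'
    rw [← Nat.factorial_mul_descFactorial h]
    push_cast
    field_simp
  · rw [Nat.descFactorial_eq_zero_iff_lt.mpr (by omega), Nat.cast_zero, zero_div]

section Wohlfahrt

variable (G : Type*) [Group G]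

noncomputable def homPermEGF : ℚ⟦X⟧ :=
  mk fun m => (Nat.card (G →* Perm (Fin m)) : ℚ) / (m.factorial : ℚ)

noncomputable def subgroupIndexSeries : ℚ⟦X⟧ :=
  ∑ᶠ H : Subgroup G, ((H.index : ℚ)⁻¹) • (X : ℚ⟦X⟧) ^ H.index

lemma constantCoeff_homPermEGF : constantCoeff (homPermEGF G) = 1 := by
  have : Nat.card (G →* Perm (Fin 0)) = 1 := Nat.card_eq_one_iff_unique.mpr
    ⟨⟨fun _ _ => MonoidHom.ext fun _ => Subsingleton.elim _ _⟩, ⟨1⟩⟩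
  rw [← coeff_zero_eq_constantCoeff_apply, homPermEGF, coeff_mk, this]
  simp

variable [Finite G]

lemma constantCoeff_subgroupIndexSeries : constantCoeff (subgroupIndexSeries G) = 0 := by
  have := Fintype.ofFinite (Subgroup G)
  rw [subgroupIndexSeries, finsum_eq_sum_of_fintype, map_sum]
  refine sum_eq_zero fun H _ => ?_
  simp [Subgroup.index_ne_zero_of_finite]

lemma derivative_subgroupIndexSeries :
    d⁄dX ℚ (subgroupIndexSeries G) = ∑ᶠ H : Subgroup G, X ^ (H.index - 1) := by
  have := Fintype.ofFinite (Subgroup G)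
  rw [subgroupIndexSeries, finsum_eq_sum_of_fintype, finsum_eq_sum_of_fintype, map_sum]
  refine sum_congr rfl fun H _ => ?_
  have : (H.index : ℚ) ≠ 0 := by exact_mod_cast Subgroup.index_ne_zero_of_finite
  rw [Derivation.map_smul_of_tower, derivative_pow, derivative_X, mul_one, ← nsmul_eq_mul,
    ← Nat.cast_smul_eq_nsmul ℚ, smul_smul, inv_mul_cancel₀ this, one_smul]

lemma derivative_homPermEGF :
    d⁄dX ℚ (homPermEGF G) = d⁄dX ℚ (subgroupIndexSeries G) * homPermEGF G := by
  have := Fintype.ofFinite (Subgroup G)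
  ext n
  rw [derivative_subgroupIndexSeries, finsum_eq_sum_of_fintype, sum_mul, map_sum,
    coeff_derivative, homPermEGF, coeff_mk, card_monoidHom_perm_fin_succ,
    finsum_eq_sum_of_fintype, Nat.factorial_succ]
  have hn : ((n : ℚ) + 1) ≠ 0 := by positivity
  push_cast
  rw [div_mul_eq_mul_div, mul_comm ((n : ℚ) + 1), mul_div_mul_right _ _ hn, sum_div]
  refine sum_congr rfl fun H _ => ?_
  rw [coeff_X_pow_mul', mul_div_right_comm, descFactorial_div_factorial]
  split_ifs <;> simp [coeff_mk, div_eq_inv_mul]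

end Wohlfahrt

/-- Wohlfahrt's identity: for a finite group `G`,
`Σ_{m≥0} (|Hom(G,Σ_m)|/m!) X^m = exp(Σ_{H ≤ G} X^{[G:H]}/[G:H])` in `ℚ[[X]]`,
the sum running over all subgroups `H` of `G`. -/
theorem stmt9 (G : Type*) [Group G] [Fintype G] :
    (PowerSeries.mk fun m =>
        (Nat.card (G →* Equiv.Perm (Fin m)) : ℚ) / (m.factorial : ℚ)) =
      expPS ℚ (∑ᶠ H : Subgroup G, ((H.index : ℚ)⁻¹) • (PowerSeries.X : PowerSeries ℚ) ^ H.index) :=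
  eq_of_derivative_eq_mul_self (derivative_homPermEGF G)
    (derivative_expPS (constantCoeff_subgroupIndexSeries G))
    ((constantCoeff_homPermEGF G).trans (constantCoeff_expPS _).symm)
end

section
/- For a p-torsion free commutative ring A with A/p a perfect 𝔽_p-algebra and A p-adically complete, the ring of p-typical Witt vectors W_p(A/p) is isomorphic to A via the inverse limit of the maps gh̃_{p^d}: W_p(A/p) → A/p^{d+1}. In particular W_p(𝔽_p) ≅ ℤ_p. -/
/-!
Fontaine's map `θ : W(A♭) → A` is constructed as the inverse limit of the maps
`gh̃_{p^n} ∘ W(φ⁻ⁿ) : W(A♭) → A/p^{n+1}`. When `A/p` is perfect, `A♭ = lim_{x ↦ x^p} A/p` is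
just `A/p`, so `θ` becomes a map `W(A/p) → A` that reduces mod `p` to the zeroth coefficient.
It is surjective because `A` is `p`-adically complete. It is injective because `W(A/p)` is
`p`-adically separated, `A` is `p`-torsion free and, `A/p` being perfect, the kernel of the
zeroth coefficient is `p W(A/p)`: a kernel element is divisible by `p`, the quotient again
lies in the kernel, and so on.
-/

open Ideal

theorem IsHausdorff.subsingleton_of_isUnit {R M : Type*} [CommRing R] [AddCommGroup M]
    [Module R M] {ϖ : R} (h : IsHausdorff (span {ϖ}) M) (hϖ : IsUnit ϖ) : Subsingleton M := by
  rw [span_singleton_eq_top.mpr hϖ] at h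
  exact h.subsingleton

theorem RingHom.injective_of_dvd_of_isHausdorff {R S : Type*} [CommRing R] [CommRing S]
    (f : R →+* S) {ϖ : R} [IsHausdorff (span {ϖ}) R] (hreg : IsLeftRegular (f ϖ))
    (hdvd : ∀ x, f ϖ ∣ f x → ϖ ∣ x) : Function.Injective f := by
  have hpow : ∀ n x, f x = 0 → ϖ ^ n ∣ x := by
    intro n
    induction n with
    | zero => simp
    | succ n ih =>
      intro x hx
      obtain ⟨y, rfl⟩ := hdvd x (hx ▸ dvd_zero _)
      have hy : f y = 0 := hreg (by simpa using hx)
      rw [pow_succ']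
      exact mul_dvd_mul_left ϖ (ih y hy)
  refine (injective_iff_map_eq_zero f).mpr fun x hx ↦ IsHausdorff.haus ‹_› x fun n ↦ ?_
  rw [SModEq.zero, smul_eq_mul, mul_top, span_singleton_pow, mem_span_singleton]
  exact hpow n x hx

section PerfectModP

variable (p : ℕ) [Fact p.Prime] (A : Type*) [CommRing A] [Fact ¬IsUnit (p : A)]
  [PerfectRing (ModP A p) p]

noncomputable def ModP.equivPreTilt : ModP A p ≃+* PreTilt A p :=
  (PerfectionMap.id p (ModP A p)).equiv

variable [IsAdicComplete (span {(p : A)}) A]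

namespace WittVector

noncomputable def fontaineThetaOfPerfect : WittVector p (ModP A p) →+* A :=
  (fontaineTheta A p).comp (map (ModP.equivPreTilt p A : ModP A p →+* PreTilt A p))

theorem mk_fontaineThetaOfPerfect (x : WittVector p (ModP A p)) :
    Ideal.Quotient.mk (span {(p : A)}) (fontaineThetaOfPerfect p A x) = x.coeff 0 := by
  rw [fontaineThetaOfPerfect, RingHom.comp_apply, mk_fontaineTheta, map_coeff]
  rfl

theorem fontaineThetaOfPerfect_surjective : Function.Surjective (fontaineThetaOfPerfect p A) :=
  (surjective_fontaineTheta (bijective_frobenius _ p).surjective).comp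
    (map_surjective _ (ModP.equivPreTilt p A).surjective)

theorem fontaineThetaOfPerfect_injective (htf : IsLeftRegular (p : A)) :
    Function.Injective (fontaineThetaOfPerfect p A) := by
  refine (fontaineThetaOfPerfect p A).injective_of_dvd_of_isHausdorff (ϖ := p)
    (by rwa [map_natCast]) fun x hx ↦ ?_
  rw [← mem_span_singleton, mem_span_p_iff_coeff_zero_eq_zero, ← mk_fontaineThetaOfPerfect,
    Ideal.Quotient.eq_zero_iff_dvd]
  simpa using hx

end WittVector

end PerfectModP

/-- for a `p`-torsion free, `p`-adically complete commutative ring `A` with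
`A/p` a perfect `𝔽_p`-algebra, the `p`-typical Witt vectors `W_p(A/p)` are isomorphic to
`A` (by the inverse limit of the ghost maps; in particular the isomorphism reduces mod `p`
to the zeroth Witt component).  In particular `W_p(𝔽_p) ≅ ℤ_p`. -/
theorem stmt14 (p : ℕ) [hp : Fact p.Prime] (A : Type*) [CommRing A]
    (htf : ∀ a : A, (p : A) * a = 0 → a = 0)
    [IsAdicComplete (Ideal.span {(p : A)}) A]
    (hperf : Function.Bijective
      (fun a : A ⧸ Ideal.span {(p : A)} => a ^ p)) :
    (∃ e : WittVector p (A ⧸ Ideal.span {(p : A)}) ≃+* A,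
      ∀ x : WittVector p (A ⧸ Ideal.span {(p : A)}),
        Ideal.Quotient.mk (Ideal.span {(p : A)}) (e x) = x.coeff 0) ∧
    Nonempty (WittVector p (ZMod p) ≃+* ℤ_[p]) := by
  refine ⟨?_, ⟨WittVector.equiv p⟩⟩
  by_cases hunit : IsUnit (p : A)
  · have : Subsingleton A := IsAdicComplete.toIsHausdorff.subsingleton_of_isUnit hunit
    have : Subsingleton (WittVector p (A ⧸ span {(p : A)})) :=
      ⟨fun _ _ ↦ WittVector.ext fun _ ↦ Subsingleton.elim _ _⟩
    have : Unique A := uniqueOfSubsingleton 0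
    have : Unique (WittVector p (A ⧸ span {(p : A)})) := uniqueOfSubsingleton 0
    exact ⟨RingEquiv.ofUnique, fun _ ↦ Subsingleton.elim _ _⟩
  · have : Fact ¬IsUnit (p : A) := ⟨hunit⟩
    have : PerfectRing (ModP A p) p := ⟨hperf⟩
    have htf' : IsLeftRegular (p : A) := isLeftRegular_iff_right_eq_zero_of_mul.mpr htf
    exact ⟨RingEquiv.ofBijective _
        ⟨WittVector.fontaineThetaOfPerfect_injective p A htf',
          WittVector.fontaineThetaOfPerfect_surjective p A⟩,
      WittVector.mk_fontaineThetaOfPerfect p A⟩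
end
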